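/- arXiv:2011.02923 — 11 statements merged into one kernel-verified Lean document; each statement's English description precedes it below -/
import Mathlib

section
/- Let q be a prime power, r ≥ 1, and let M be a q^r-divisible multiset of points in PG(v-1,q), i.e., |M ∩ H| ≡ |M| (mod q^r) for every hyperplane H. Then for every subspace U of codimension 2 in PG(v-1,q), we have |M ∩ U| ≡ |M| (mod q^{r-1}). -/
open Module
open scoped Classical LinearAlgebra.Projectivization

/-!
The hyperplanes through a codimension-2 subspace `U` are the preimages of the `q + 1` points of
the projective line `ℙ(V ⧸ U)`. A point of `U` lies on all of them and any other point on exactly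
one, so the sum of `|M ∩ H|` over them is `q |M ∩ U| + |M|`, while `q^r`-divisibility makes it
`≡ (q + 1) |M| (mod q^r)`. Cancelling `q` leaves the claim modulo `q^(r-1)`.
-/

namespace Projectivization

variable {K V W : Type*} [DivisionRing K] [AddCommGroup V] [Module K V] [AddCommGroup W]
  [Module K W]

theorem mem_submodule_iff_eq_mk {w : V} (hw : w ≠ 0) (L : ℙ K V) :
    w ∈ L.submodule ↔ L = mk K w hw := by
  constructor
  · intro hwL
    apply submodule_injective
    rw [submodule_mk]
    refine (Submodule.eq_of_le_of_finrank_eq ((Submodule.span_singleton_le_iff_mem _ _).2 hwL)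
      ?_).symm
    rw [finrank_span_singleton hw, finrank_submodule]
  · rintro rfl
    rw [submodule_mk]
    exact Submodule.mem_span_singleton_self w

theorem card_filter_mem_submodule [Fintype (ℙ K V)] {w : V} (hw : w ≠ 0) :
    (Finset.univ.filter fun L : ℙ K V => w ∈ L.submodule).card = 1 :=
  Finset.card_eq_one.2 ⟨mk K w hw, by ext L; simp [mem_submodule_iff_eq_mk hw]⟩

theorem card_filter_le_comap [Fintype (ℙ K W)] (f : V →ₗ[K] W) {P : Submodule K V}
    (hP : finrank K P = 1) :
    (Finset.univ.filter fun L : ℙ K W => P ≤ L.submodule.comap f).card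
      = if P ≤ LinearMap.ker f then Fintype.card (ℙ K W) else 1 := by
  obtain ⟨x, -, rfl⟩ : ∃ x, x ≠ 0 ∧ P = K ∙ x :=
    ⟨_, rep_nonzero _, by rw [← submodule_eq, submodule_mk'' P hP]⟩
  simp only [Submodule.span_singleton_le_iff_mem, LinearMap.mem_ker]
  split_ifs with hfx
  · simp [hfx]
  · exact card_filter_mem_submodule hfx

end Projectivization

theorem Submodule.finrank_comap_mkQ {K V : Type*} [DivisionRing K] [AddCommGroup V] [Module K V]
    [FiniteDimensional K V] (U : Submodule K V) (S : Submodule K (V ⧸ U)) :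
    finrank K (S.comap U.mkQ) = finrank K U + finrank K S := by
  have hker : LinearMap.ker (S.mkQ ∘ₗ U.mkQ) = S.comap U.mkQ := by
    rw [LinearMap.ker_comp, Submodule.ker_mkQ]
  have hrange : LinearMap.range (S.mkQ ∘ₗ U.mkQ) = ⊤ :=
    LinearMap.range_eq_top.2 (S.mkQ_surjective.comp U.mkQ_surjective)
  have hV := LinearMap.finrank_range_add_finrank_ker (S.mkQ ∘ₗ U.mkQ)
  rw [hker, hrange, finrank_top] at hV
  have hU := U.finrank_quotient_add_finrank
  have hS := S.finrank_quotient_add_finrank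
  omega

theorem Multiset.sum_countP_add_countP {α ι : Type*} [Fintype ι] (p : ι → α → Prop)
    [∀ i, DecidablePred (p i)] (u : α → Prop) [DecidablePred u] (M : Multiset α)
    (hM : ∀ a ∈ M, (Finset.univ.filter fun i => p i a).card
      = if u a then Fintype.card ι else 1) :
    ∑ i, M.countP (p i) + M.countP u = Fintype.card ι * M.countP u + card M := by
  induction M using Multiset.induction_on with
  | empty => simp
  | cons a M ih =>
    have ih := ih fun b hb => hM b (Multiset.mem_cons_of_mem hb)
    have ha := hM a (Multiset.mem_cons_self a M)
    simp only [Multiset.countP_cons, Multiset.card_cons, Finset.sum_add_distrib,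
      ← Finset.card_filter, ha]
    split_ifs <;> linarith

theorem Nat.ModEq.cancel_left_pow {q r a b : ℕ} (hq : 0 < q)
    (h : q * a ≡ q * b [MOD q ^ r]) : a ≡ b [MOD q ^ (r - 1)] := by
  rcases r with _ | r
  · exact Nat.modEq_one
  · rw [pow_succ'] at h
    exact Nat.ModEq.mul_left_cancel' hq.ne' h

theorem Multiset.card_mul_countP_le_modEq_of_finrank_quotient_eq_two {F V : Type*} [Field F]
    [Fintype F] [AddCommGroup V] [Module F V] {U : Submodule F V} (hU : finrank F (V ⧸ U) = 2)
    {M : Multiset (Submodule F V)} (hpts : ∀ P ∈ M, finrank F P = 1) {n : ℕ}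
    (hH : ∀ L : ℙ F (V ⧸ U), M.countP (· ≤ L.submodule.comap U.mkQ) ≡ card M [MOD n]) :
    Fintype.card F * M.countP (· ≤ U) ≡ Fintype.card F * card M [MOD n] := by
  have : Module.Finite F (V ⧸ U) := Module.finite_of_finrank_pos (by omega)
  have : Finite (V ⧸ U) := Module.finite_of_finite F
  have : Fintype (ℙ F (V ⧸ U)) := Fintype.ofFinite _
  have hcard : Fintype.card (ℙ F (V ⧸ U)) = Fintype.card F + 1 := by
    rw [Fintype.card_eq_nat_card, Projectivization.card_of_finrank_two F _ hU,
      Nat.card_eq_fintype_card]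
  have hcount := Multiset.sum_countP_add_countP
    (fun (L : ℙ F (V ⧸ U)) P => P ≤ L.submodule.comap U.mkQ) (· ≤ U) M
    fun P hP => by rw [Projectivization.card_filter_le_comap _ (hpts P hP), Submodule.ker_mkQ]
  have hsum : ∑ L : ℙ F (V ⧸ U), M.countP (· ≤ L.submodule.comap U.mkQ)
      ≡ (Fintype.card F + 1) * card M [MOD n] := by
    rw [← hcard, ← smul_eq_mul, ← Finset.card_univ, ← Finset.sum_const]
    exact Nat.ModEq.sum fun L _ => hH L
  rw [hcard] at hcount
  refine Nat.ModEq.add_right_cancel' (M.countP (· ≤ U) + card M) ?_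
  calc Fintype.card F * M.countP (· ≤ U) + (M.countP (· ≤ U) + card M)
      = ∑ L : ℙ F (V ⧸ U), M.countP (· ≤ L.submodule.comap U.mkQ) + M.countP (· ≤ U) := by
        linarith
    _ ≡ (Fintype.card F + 1) * card M + M.countP (· ≤ U) [MOD n] := hsum.add_right _
    _ = Fintype.card F * card M + (M.countP (· ≤ U) + card M) := by ring

theorem stmt0_general (q v r : ℕ)
    (F : Type) [Field F] [Fintype F] (hF : Fintype.card F = q)
    (M : Multiset (Submodule F (Fin v → F)))
    (hpts : ∀ P ∈ M, finrank F P = 1)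
    (hdiv : ∀ H : Submodule F (Fin v → F), finrank F H = v - 1 →
      Multiset.countP (fun P => P ≤ H) M ≡ Multiset.card M [MOD q ^ r]) :
    ∀ U : Submodule F (Fin v → F), finrank F U = v - 2 →
      Multiset.countP (fun P => P ≤ U) M ≡ Multiset.card M [MOD q ^ (r - 1)] := by
  intro U hU
  rcases lt_or_ge v 2 with hv | hv
  -- `v - 2` and `v - 1` both truncate to `0`, so `U = ⊥` is itself a hyperplane.
  · obtain rfl : U = ⊥ := Submodule.finrank_eq_zero.1 (by omega)
    exact (hdiv ⊥ (by rw [finrank_bot]; omega)).of_dvd (pow_dvd_pow q (r.sub_le 1))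
  have hW : finrank F ((Fin v → F) ⧸ U) = 2 := by
    have := U.finrank_quotient_add_finrank
    rw [finrank_fin_fun] at this
    omega
  subst hF
  refine Nat.ModEq.cancel_left_pow Fintype.card_pos ?_
  refine Multiset.card_mul_countP_le_modEq_of_finrank_quotient_eq_two hW hpts fun L => hdiv _ ?_
  rw [Submodule.finrank_comap_mkQ, hU, Projectivization.finrank_submodule]
  omega

/-- If a multiset `M` of points of `PG(v-1,q)` is `q^r`-divisible
(every hyperplane `H` satisfies `|M ∩ H| ≡ |M| (mod q^r)`), then every
codimension-2 subspace `U` satisfies `|M ∩ U| ≡ |M| (mod q^(r-1))`. -/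
theorem stmt0 (q v r : ℕ) (hq : ∃ p n : ℕ, p.Prime ∧ q = p ^ n) (hr : 1 ≤ r)
    (F : Type) [Field F] [Fintype F] (hF : Fintype.card F = q)
    (M : Multiset (Submodule F (Fin v → F)))
    (hpts : ∀ P ∈ M, finrank F P = 1)
    (hdiv : ∀ H : Submodule F (Fin v → F), finrank F H = v - 1 →
      Multiset.countP (fun P => P ≤ H) M ≡ Multiset.card M [MOD q ^ r]) :
    ∀ U : Submodule F (Fin v → F), finrank F U = v - 2 →
      Multiset.countP (fun P => P ≤ U) M ≡ Multiset.card M [MOD q ^ (r - 1)] :=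
  stmt0_general q v r F hF M hpts hdiv
end

section
/- The multiset of points of an (r+1)-cylinder in PG(v-1,q) is q^r-divisible, i.e., every hyperplane meets it in a number of points congruent to 0 modulo q^r. -/
open Module
open scoped Classical

lemma aux_pow_sub (q k : ℕ) : q ^ (k + 1) - q ^ k = (q - 1) * q ^ k := by
  rw [Nat.sub_mul, one_mul, pow_succ']

lemma aux_count (q v : ℕ) (F : Type) [Field F] [Fintype F] (hF : Fintype.card F = q)
    (A B : Submodule F (Fin v → F)) :
    (q - 1) * (Finset.univ.filter fun P : Submodule F (Fin v → F) =>
        finrank F P = 1 ∧ P ≤ A ∧ ¬ P ≤ B).card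
      = q ^ finrank F A - q ^ finrank F (A ⊓ B : Submodule F (Fin v → F)) := by
  classical
  set T := (Finset.univ.filter fun P : Submodule F (Fin v → F) =>
        finrank F P = 1 ∧ P ≤ A ∧ ¬ P ≤ B) with hT
  set S : Finset (Fin v → F) := Finset.univ.filter (fun x => x ∈ A ∧ x ∉ B) with hS
  have hmap : ∀ x ∈ S, Submodule.span F ({x} : Set (Fin v → F)) ∈ T := by
    intro x hx
    rw [hS, Finset.mem_filter] at hx
    obtain ⟨-, hxA, hxB⟩ := hx
    have hx0 : x ≠ 0 := fun h => hxB (h ▸ B.zero_mem)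
    rw [hT, Finset.mem_filter]
    refine ⟨Finset.mem_univ _, finrank_span_singleton hx0,
      (Submodule.span_singleton_le_iff_mem x A).2 hxA, fun h => hxB ?_⟩
    exact h (Submodule.mem_span_singleton_self x)
  have hcardS : S.card = ∑ P ∈ T, (S.filter fun x => Submodule.span F ({x} : Set (Fin v → F)) = P).card :=
    Finset.card_eq_sum_card_fiberwise hmap
  have hcardsub : ∀ W : Submodule F (Fin v → F),
      (Finset.univ.filter (fun x => x ∈ W)).card = q ^ finrank F W := by
    intro W
    rw [← Fintype.card_subtype, ← hF]
    exact (card_eq_pow_finrank (K := F) (V := W)).symm ▸ rfl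
  have hfib : ∀ P ∈ T, (S.filter fun x => Submodule.span F ({x} : Set (Fin v → F)) = P).card = q - 1 := by
    intro P hP
    rw [hT, Finset.mem_filter] at hP
    obtain ⟨-, hP1, hPA, hPB⟩ := hP
    have heq : (S.filter fun x => Submodule.span F ({x} : Set (Fin v → F)) = P)
        = (Finset.univ.filter (fun x => x ∈ P)).erase 0 := by
      ext x
      simp only [hS, Finset.mem_filter, Finset.mem_erase, Finset.mem_univ, true_and,
        Finset.filter_filter]
      constructor
      · rintro ⟨⟨hxA, hxB⟩, hsp⟩
        have hx0 : x ≠ 0 := fun h => hxB (h ▸ B.zero_mem)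
        exact ⟨hx0, hsp ▸ Submodule.mem_span_singleton_self x⟩
      · rintro ⟨hx0, hxP⟩
        have hle : Submodule.span F ({x} : Set (Fin v → F)) ≤ P :=
          (Submodule.span_singleton_le_iff_mem x P).2 hxP
        have hsp : Submodule.span F ({x} : Set (Fin v → F)) = P :=
          Submodule.eq_of_le_of_finrank_eq hle (by rw [finrank_span_singleton hx0, hP1])
        refine ⟨⟨hPA hxP, fun hxB => hPB ?_⟩, hsp⟩
        rw [← hsp]
        exact (Submodule.span_singleton_le_iff_mem x B).2 hxB
    rw [heq, Finset.card_erase_of_mem (by simp [P.zero_mem]), hcardsub, hP1, pow_one]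
  have hST : S.card = T.card * (q - 1) := by
    rw [hcardS, Finset.sum_congr rfl hfib, Finset.sum_const, smul_eq_mul]
  have hSsd : S = (Finset.univ.filter (fun x => x ∈ A)) \
      (Finset.univ.filter (fun x => x ∈ A ⊓ B)) := by
    ext x
    simp only [hS, Finset.mem_filter, Finset.mem_sdiff, Finset.mem_univ, true_and,
      Submodule.mem_inf]
    tauto
  have hsub : (Finset.univ.filter (fun x => x ∈ A ⊓ B)) ⊆ (Finset.univ.filter (fun x => x ∈ A)) := by
    intro x hx
    simp only [Finset.mem_filter, Finset.mem_univ, true_and, Submodule.mem_inf] at hx ⊢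
    exact hx.1
  rw [mul_comm, ← hST, hSsd, Finset.card_sdiff_of_subset hsub, hcardsub, hcardsub]

lemma aux_inf_finrank_lower (v : ℕ) (F : Type) [Field F] [Fintype F]
    (A B : Submodule F (Fin v → F)) :
    finrank F A + finrank F B ≤ finrank F (A ⊓ B : Submodule F (Fin v → F)) + v := by
  have h1 := Submodule.finrank_sup_add_finrank_inf_eq A B
  have h2 : finrank F ((A ⊔ B : Submodule F (Fin v → F))) ≤ v := by
    have := Submodule.finrank_le (A ⊔ B)
    rwa [Module.finrank_fin_fun] at this
  omega

/-- The multiset of points of an `(r+1)`-cylinder (the union of the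
`q` affine `(r+1)`-spaces `L i \ Fsub`, where `Fsub` is an `r`-space contained in
every `(r+1)`-space `L i`) is `q^r`-divisible: every hyperplane meets it in a
number of points divisible by `q^r`. -/
theorem stmt1 (q v r : ℕ) (F : Type) [Field F] [Fintype F] (hF : Fintype.card F = q)
    (Fsub : Submodule F (Fin v → F)) (hFsub : finrank F Fsub = r)
    (L : Fin q → Submodule F (Fin v → F))
    (hL : ∀ i, finrank F (L i) = r + 1) (hFL : ∀ i, Fsub ≤ L i)
    (M : Multiset (Submodule F (Fin v → F)))
    (hpts : ∀ P ∈ M, finrank F P = 1)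
    (hcount : ∀ P : Submodule F (Fin v → F), finrank F P = 1 →
      M.count P = (Finset.univ.filter fun i : Fin q => P ≤ L i ∧ ¬ P ≤ Fsub).card)
    (H : Submodule F (Fin v → F)) (hH : finrank F H = v - 1) :
    q ^ r ∣ Multiset.countP (fun P => P ≤ H) M := by
  classical
  have hq2 : 2 ≤ q := hF ▸ Fintype.one_lt_card
  set T0 := (Finset.univ.filter
    (fun P : Submodule F (Fin v → F) => finrank F P = 1 ∧ P ≤ H)) with hT0
  -- Step 1: countP as a sum over T0
  have step1 : Multiset.countP (fun P => P ≤ H) M = ∑ P ∈ T0, M.count P := by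
    rw [Multiset.countP_eq_card_filter, ← Multiset.toFinset_sum_count_eq]
    have hsub : (M.filter (fun P => P ≤ H)).toFinset ⊆ T0 := by
      intro P hP
      rw [Multiset.mem_toFinset, Multiset.mem_filter] at hP
      rw [hT0, Finset.mem_filter]
      exact ⟨Finset.mem_univ _, hpts P hP.1, hP.2⟩
    rw [Finset.sum_subset hsub (fun P _ hP => by
      rw [Multiset.count_eq_zero]; rwa [Multiset.mem_toFinset] at hP)]
    refine Finset.sum_congr rfl fun P hP => ?_
    rw [hT0, Finset.mem_filter] at hP
    rw [Multiset.count_filter, if_pos hP.2.2]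
  -- Step 2: swap sums
  have step2 : ∑ P ∈ T0, M.count P = ∑ i : Fin q,
      (Finset.univ.filter (fun P : Submodule F (Fin v → F) =>
        finrank F P = 1 ∧ P ≤ (L i ⊓ H) ∧ ¬ P ≤ Fsub)).card := by
    have h1 : ∀ P ∈ T0, M.count P = ∑ i : Fin q,
        if P ≤ L i ∧ ¬ P ≤ Fsub then 1 else 0 := by
      intro P hP
      rw [hT0, Finset.mem_filter] at hP
      rw [hcount P hP.2.1, Finset.card_filter]
    rw [Finset.sum_congr rfl h1, Finset.sum_comm]
    refine Finset.sum_congr rfl fun i _ => ?_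
    rw [← Finset.card_filter]
    congr 1
    ext P
    simp only [hT0, Finset.mem_filter, Finset.mem_univ, true_and, le_inf_iff]
    tauto
  rw [step1, step2]
  set c : Fin q → ℕ := fun i => (Finset.univ.filter (fun P : Submodule F (Fin v → F) =>
        finrank F P = 1 ∧ P ≤ (L i ⊓ H) ∧ ¬ P ≤ Fsub)).card with hc
  have hkey : ∀ i, (q - 1) * c i
      = q ^ finrank F ((L i ⊓ H : Submodule F (Fin v → F)))
        - q ^ finrank F (((L i ⊓ H) ⊓ Fsub : Submodule F (Fin v → F))) :=
    fun i => aux_count q v F hF (L i ⊓ H) Fsub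
  by_cases hFH : Fsub ≤ H
  · -- Fsub inside the hyperplane
    refine Finset.dvd_sum fun i _ => ?_
    show q ^ r ∣ c i
    have h1 : Fsub ≤ L i ⊓ H := le_inf (hFL i) hFH
    have h2 : (L i ⊓ H : Submodule F (Fin v → F)) ⊓ Fsub = Fsub := inf_eq_right.2 h1
    have h3 : r ≤ finrank F ((L i ⊓ H : Submodule F (Fin v → F))) :=
      hFsub ▸ Submodule.finrank_mono h1
    have h4 : finrank F ((L i ⊓ H : Submodule F (Fin v → F))) ≤ r + 1 :=
      (hL i) ▸ Submodule.finrank_mono inf_le_left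
    have hk := hkey i
    rw [h2, hFsub] at hk
    rcases (by omega : finrank F ((L i ⊓ H : Submodule F (Fin v → F))) = r
        ∨ finrank F ((L i ⊓ H : Submodule F (Fin v → F))) = r + 1) with h | h
    · rw [h, Nat.sub_self] at hk
      have : c i = 0 := by
        rcases Nat.mul_eq_zero.1 hk with h' | h' <;> omega
      rw [this]
      exact dvd_zero _
    · rw [h, aux_pow_sub] at hk
      have : c i = q ^ r := Nat.eq_of_mul_eq_mul_left (by omega) hk
      rw [this]
  · -- Fsub not inside the hyperplane
    have hv1 : 1 ≤ v := by
      by_contra hv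
      have hle := Submodule.finrank_le Fsub
      rw [Module.finrank_fin_fun] at hle
      have : Fsub = ⊥ := Submodule.finrank_eq_zero.1 (by omega)
      exact hFH (this ▸ bot_le)
    have hr1 : 1 ≤ r := by
      rcases Nat.eq_zero_or_pos r with h | h
      · have : Fsub = ⊥ := Submodule.finrank_eq_zero.1 (by omega)
        exact absurd (this ▸ bot_le : Fsub ≤ H) hFH
      · exact h
    obtain ⟨s, rfl⟩ : ∃ s, r = s + 1 := ⟨r - 1, by omega⟩
    have hFHd : finrank F ((Fsub ⊓ H : Submodule F (Fin v → F))) = s := by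
      have hlow := aux_inf_finrank_lower v F Fsub H
      have hlt : (Fsub ⊓ H : Submodule F (Fin v → F)) < Fsub := by
        refine lt_of_le_of_ne inf_le_left fun h => hFH ?_
        rw [← h]; exact inf_le_right
      have := Submodule.finrank_lt_finrank_of_lt hlt
      rw [hFsub, hH] at *
      omega
    have hci : ∀ i, c i = q ^ (s) := by
      intro i
      have hLH : ¬ L i ≤ H := fun h => hFH ((hFL i).trans h)
      have hd : finrank F ((L i ⊓ H : Submodule F (Fin v → F))) = s + 1 := by
        have hlow := aux_inf_finrank_lower v F (L i) H
        have hlt : (L i ⊓ H : Submodule F (Fin v → F)) < L i := by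
          refine lt_of_le_of_ne inf_le_left fun h => hLH ?_
          rw [← h]; exact inf_le_right
        have := Submodule.finrank_lt_finrank_of_lt hlt
        rw [hL i, hH] at *
        omega
      have he : (L i ⊓ H : Submodule F (Fin v → F)) ⊓ Fsub = Fsub ⊓ H := by
        apply le_antisymm
        · exact le_inf inf_le_right (inf_le_left.trans inf_le_right)
        · exact le_inf (le_inf (inf_le_left.trans (hFL i)) inf_le_right) inf_le_left
      have hk := hkey i
      rw [hd, he, hFHd, aux_pow_sub] at hk
      exact Nat.eq_of_mul_eq_mul_left (by omega) hk
    rw [Finset.sum_congr rfl (fun i _ => hci i), Finset.sum_const, Finset.card_univ,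
      Fintype.card_fin, smul_eq_mul, ← pow_succ']
end

section
/- Let q ≥ 2 and v > r ≥ 0 be integers, and let a_0, ..., a_{q-1} be nonnegative reals satisfying the three standard equations for a q^r-divisible spanning set of q^{r+1} points in PG(v-1,q). Then a_0 ≥ (q^{v−r−1} − 1)/(q−1). -/
/-- from the standard equations for a `q^r`-divisible spanning set of
`q^(r+1)` points in `PG(v-1,q)` (with `a i` the number of hyperplanes containing
exactly `i·q^r` points), one gets the lower bound on the number of empty hyperplanes
`a 0 ≥ (q^(v−r−1) − 1)/(q−1)`. -/
theorem stmt5 (q v r : ℕ) (hq : 2 ≤ q) (hvr : r < v)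
    (a : ℕ → ℝ) (ha : ∀ i, 0 ≤ a i)
    (h1 : ((q : ℝ) - 1) * ∑ i ∈ Finset.range q, a i = (q : ℝ) ^ v - 1)
    (h2 : ((q : ℝ) - 1) * ∑ i ∈ Finset.range q, (i : ℝ) * a i
        = (q : ℝ) * ((q : ℝ) ^ (v - 1) - 1))
    (h3 : ((q : ℝ) - 1) * ∑ i ∈ Finset.range q, (i : ℝ) * ((i : ℝ) * (q : ℝ) ^ r - 1) * a i
        = (q : ℝ) * ((q : ℝ) ^ (r + 1) - 1) * ((q : ℝ) ^ (v - 2) - 1)) :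
    a 0 ≥ ((q : ℝ) ^ (v - r - 1) - 1) / ((q : ℝ) - 1) := by
  have hq1 : (1:ℝ) ≤ (q:ℝ) - 1 := by
    have : (2:ℝ) ≤ (q:ℝ) := by exact_mod_cast hq
    linarith
  have hqpos : (0:ℝ) < (q:ℝ) - 1 := by linarith
  have hqr : (0:ℝ) < (q:ℝ) ^ r := by positivity
  rcases Nat.lt_or_ge (r + 1) v with hv | hv
  · -- v ≥ r + 2, write v = r + t + 2
    obtain ⟨t, ht⟩ : ∃ t, v = r + t + 2 := ⟨v - r - 2, by omega⟩
    subst ht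
    have e1 : r + t + 2 - 1 = r + t + 1 := by omega
    have e2 : r + t + 2 - 2 = r + t := by omega
    have e3 : r + t + 2 - r - 1 = t + 1 := by omega
    rw [e1] at h2
    rw [e2] at h3
    rw [e3]
    -- key sum
    set S := ∑ i ∈ Finset.range q, (q:ℝ) ^ r * ((i:ℝ) - 1) * ((i:ℝ) - q + 1) * a i with hS
    have hsum : S = (q:ℝ) ^ r * ((q:ℝ) - 1) * (∑ i ∈ Finset.range q, a i)
        - ((q:ℝ) ^ (r+1) - 1) * (∑ i ∈ Finset.range q, (i:ℝ) * a i)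
        + ∑ i ∈ Finset.range q, (i:ℝ) * ((i:ℝ) * (q:ℝ) ^ r - 1) * a i := by
      rw [hS, Finset.mul_sum, Finset.mul_sum, ← Finset.sum_sub_distrib, ← Finset.sum_add_distrib]
      refine Finset.sum_congr rfl fun i _ => ?_
      ring
    -- bound S ≤ q^r (q-1) a 0
    have hbound : S ≤ (q:ℝ) ^ r * ((q:ℝ) - 1) * a 0 := by
      have h0q : 0 < q := by omega
      calc S ≤ ∑ i ∈ Finset.range q,
            (if i = 0 then (q:ℝ) ^ r * ((q:ℝ) - 1) * a 0 else 0) := by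
              refine Finset.sum_le_sum fun i hi => ?_
              rcases eq_or_ne i 0 with rfl | hne
              · simp; ring_nf; rfl
              · simp only [hne, if_neg, if_false]
                have hi1 : (1:ℝ) ≤ (i:ℝ) := by
                  exact_mod_cast Nat.one_le_iff_ne_zero.mpr hne
                have hiq : (i:ℝ) ≤ (q:ℝ) - 1 := by
                  have : i ≤ q - 1 := by
                    have := Finset.mem_range.mp hi; omega
                  have : (i:ℝ) ≤ ((q - 1 : ℕ) : ℝ) := by exact_mod_cast this
                  rw [Nat.cast_sub (by omega)] at this
                  simpa using this
                have hnn : 0 ≤ (q:ℝ) ^ r * ((i:ℝ) - 1) * a i :=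
                  mul_nonneg (mul_nonneg (le_of_lt hqr) (by linarith)) (ha i)
                have hnp : (i:ℝ) - q + 1 ≤ 0 := by linarith
                have := mul_nonpos_of_nonneg_of_nonpos hnn hnp
                nlinarith [this]
        _ = (q:ℝ) ^ r * ((q:ℝ) - 1) * a 0 := by
              rw [Finset.sum_ite_eq' (Finset.range q) 0]
              simp [h0q]
    -- combine the three equations
    have hcomb : ((q:ℝ) - 1) * S = ((q:ℝ) - 1) * ((q:ℝ) ^ r * ((q:ℝ) ^ (t+1) - 1)) := by
      rw [hsum]
      linear_combination ((q:ℝ)^r * ((q:ℝ) - 1)) * h1 - ((q:ℝ)^(r+1) - 1) * h2 + h3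
    have hfin : ((q:ℝ) - 1) * ((q:ℝ)^r * ((q:ℝ) - 1) * a 0)
        ≥ ((q:ℝ) - 1) * ((q:ℝ) ^ r * ((q:ℝ) ^ (t+1) - 1)) := by
      rw [← hcomb]
      exact mul_le_mul_of_nonneg_left hbound (le_of_lt hqpos)
    rw [ge_iff_le, div_le_iff₀ hqpos]
    nlinarith [hfin, mul_pos hqpos hqr]
  · -- v = r + 1, bound is 0
    have hv1 : v = r + 1 := by omega
    subst hv1
    have h0 : r + 1 - r - 1 = 0 := by omega
    rw [h0]
    simpa using ha 0
end

section
/- Every q^r-divisible spanning set of q^{r+1} points in PG(v-1,q) admits at least one hyperplane containing none of its points. -/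
/-! Double counting over linear functionals. A point lies in the kernel of exactly `q ^ (n - 1)`
functionals, one of which is `0`, so summed over the `q ^ n - 1` nonzero functionals the points of
`S` on the kernel number `|S| (q ^ (n - 1) - 1) < (q ^ n - 1) |S| / q`. Hence some hyperplane meets
`S` in fewer than `|S| / q = q ^ r` points, and `q ^ r`-divisibility forces that number to be `0`. -/

open Module Finset
open scoped Classical

namespace Module.Dual

variable {F V : Type*} [Field F] [Fintype F] [AddCommGroup V] [Module F V] [FiniteDimensional F V]

lemma card_dualAnnihilator [Fintype (Dual F V)] (W : Submodule F V) :
    Fintype.card W.dualAnnihilator = Fintype.card F ^ (finrank F V - finrank F W) := by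
  have hW := Subspace.finrank_add_finrank_dualAnnihilator_eq W
  rw [card_eq_pow_finrank (K := F)]
  congr 1; omega

lemma sum_card_filter_le_ker [Fintype (Dual F V)] (S : Finset (Submodule F V))
    (hpts : ∀ P ∈ S, finrank F P = 1) :
    ∑ f : Dual F V, #{P ∈ S | P ≤ LinearMap.ker f} = #S * Fintype.card F ^ (finrank F V - 1) := by
  simp only [card_filter]
  rw [sum_comm, ← smul_eq_mul, ← sum_const, sum_congr rfl fun P hP => ?_]
  rw [← card_filter, ← hpts P hP, ← card_dualAnnihilator, ← Fintype.card_subtype]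
  exact Fintype.card_congr <| Equiv.subtypeEquivRight fun f => by
    rw [Submodule.mem_dualAnnihilator]; rfl

theorem exists_ne_zero_card_mul_card_filter_le_ker_lt (S : Finset (Submodule F V))
    (hpts : ∀ P ∈ S, finrank F P = 1) (hS : S.Nonempty) :
    ∃ f : Dual F V, f ≠ 0 ∧ Fintype.card F * #{P ∈ S | P ≤ LinearMap.ker f} < #S := by
  have : Finite (Dual F V) := Module.finite_of_finite F
  have : Fintype (Dual F V) := Fintype.ofFinite _
  by_contra! hbig
  set q := Fintype.card F
  set n := finrank F V
  have hq : 2 ≤ q := Fintype.one_lt_card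
  have hn : 1 ≤ n := by
    obtain ⟨P, hP⟩ := hS
    exact hpts P hP ▸ P.finrank_le
  have hqn : q * q ^ (n - 1) = q ^ n := by rw [← pow_succ', Nat.sub_add_cancel hn]
  have hzero : #{P ∈ S | P ≤ LinearMap.ker (0 : Dual F V)} = #S := by
    rw [LinearMap.ker_zero]; exact congrArg card (filter_true_of_mem fun P _ => le_top)
  have hrest : (q ^ n - 1) * #S ≤
      ∑ f ∈ (univ : Finset (Dual F V)).erase 0, q * #{P ∈ S | P ≤ LinearMap.ker f} := by
    have hcard : #((univ : Finset (Dual F V)).erase 0) = q ^ n - 1 := by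
      rw [card_erase_of_mem (mem_univ _), card_univ, card_eq_pow_finrank (K := F),
        Subspace.dual_finrank_eq]
    rw [← hcard, ← smul_eq_mul]
    exact card_nsmul_le_sum _ _ _ fun f hf => hbig f (ne_of_mem_erase hf)
  have htotal : ∑ f : Dual F V, q * #{P ∈ S | P ≤ LinearMap.ker f} = q ^ n * #S := by
    rw [← mul_sum, sum_card_filter_le_ker S hpts, ← hqn]; ring
  rw [← add_sum_erase _ _ (mem_univ 0), hzero] at htotal
  have hsub : (q ^ n - 1) * #S + #S = q ^ n * #S := by
    rw [Nat.sub_mul, one_mul, Nat.sub_add_cancel (Nat.le_mul_of_pos_left _ (by positivity))]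
  have hqS : 2 * #S ≤ q * #S := Nat.mul_le_mul_right _ hq
  have hSpos : 0 < #S := hS.card_pos
  omega

end Module.Dual

theorem stmt6_general (q v r : ℕ) (F : Type) [Field F] [Fintype F] (hF : Fintype.card F = q)
    (S : Finset (Submodule F (Fin v → F))) (hpts : ∀ P ∈ S, finrank F P = 1)
    (hcard : S.card = q ^ (r + 1))
    (hdiv : ∀ H : Submodule F (Fin v → F), finrank F H = v - 1 →
      q ^ r ∣ (S.filter fun P => P ≤ H).card) :
    ∃ H : Submodule F (Fin v → F), finrank F H = v - 1 ∧
      (S.filter fun P => P ≤ H).card = 0 := by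
  have hq : 0 < q := hF ▸ Fintype.card_pos
  have hS : S.Nonempty := card_pos.mp (by rw [hcard]; positivity)
  obtain ⟨f, hf, hlt⟩ := Dual.exists_ne_zero_card_mul_card_filter_le_ker_lt S hpts hS
  have hH : finrank F (LinearMap.ker f) = v - 1 := by
    have := Dual.finrank_ker_add_one_of_ne_zero hf
    rw [finrank_fin_fun] at this
    omega
  refine ⟨LinearMap.ker f, hH, Nat.eq_zero_of_dvd_of_lt (hdiv _ hH) ?_⟩
  rw [hF, hcard, pow_succ'] at hlt
  exact Nat.lt_of_mul_lt_mul_left hlt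

/-- every `q^r`-divisible spanning set of `q^(r+1)` points in
`PG(v-1,q)` admits at least one empty hyperplane. -/
theorem stmt6 (q v r : ℕ) (F : Type) [Field F] [Fintype F] (hF : Fintype.card F = q)
    (S : Finset (Submodule F (Fin v → F))) (hpts : ∀ P ∈ S, finrank F P = 1)
    (hcard : S.card = q ^ (r + 1))
    (hdiv : ∀ H : Submodule F (Fin v → F), finrank F H = v - 1 →
      q ^ r ∣ (S.filter fun P => P ≤ H).card)
    (hspan : (⨆ P ∈ S, P) = (⊤ : Submodule F (Fin v → F))) :
    ∃ H : Submodule F (Fin v → F), finrank F H = v - 1 ∧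
      (S.filter fun P => P ≤ H).card = 0 :=
  stmt6_general q v r F hF S hpts hcard hdiv
end

section
/- Let S be a q^r-divisible spanning set of q^{r+1} points in PG(v-1,q) with v ≤ r+2. Then v = r+2 and S is the complement of a hyperplane, i.e., S equals the set of all points of PG(r+1,q) not on some fixed hyperplane (an affine space AG(r+1,q)). -/
open Module
open scoped Classical

/-!
The nonzero vectors on the `q^(r+1)` points of `S` are pairwise distinct, so there are
`q^(r+1)(q-1)` of them; this fits into the `q^v - 1` nonzero vectors only if `v ≥ r + 2`.
Double counting pairs (point of `S`, nonzero functional vanishing on it) gives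
`q^(r+1)(q^(r+1) - 1)`, which is less than `q^r` times the number `q^(r+2) - 1` of nonzero
functionals; so by divisibility some hyperplane `H` misses `S`. Then the nonzero vectors of `S`
fill the `q^(r+1)(q-1)` vectors outside `H`, i.e. `S` is exactly the set of points off `H`.
-/

open Finset

section

variable {F V : Type*} [Field F] [AddCommGroup V] [Module F V]

lemma eq_of_mem_of_finrank_eq_one {P Q : Submodule F V} (hP : finrank F P = 1)
    (hQ : finrank F Q = 1) {x : V} (hxP : x ∈ P) (hxQ : x ∈ Q) (hx : x ≠ 0) : P = Q := by
  rw [eq_span_singleton_of_mem_of_finrank_eq_one hP hxP hx,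
    eq_span_singleton_of_mem_of_finrank_eq_one hQ hxQ hx]

lemma le_iff_mem_of_finrank_eq_one {P W : Submodule F V} (hP : finrank F P = 1) {x : V}
    (hxP : x ∈ P) (hx : x ≠ 0) : P ≤ W ↔ x ∈ W := by
  rw [eq_span_singleton_of_mem_of_finrank_eq_one hP hxP hx, Submodule.span_singleton_le_iff_mem]

lemma exists_mem_ne_zero_of_finrank_eq_one {P : Submodule F V} (hP : finrank F P = 1) :
    ∃ x ∈ P, x ≠ 0 :=
  (Submodule.ne_bot_iff P).mp <| by rintro rfl; simp at hP

variable [Fintype F] [Fintype V]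

lemma card_filter_mem_submodule (W : Submodule F V) :
    #{x | x ∈ W} = Fintype.card F ^ finrank F W := by
  rw [← Fintype.card_subtype, ← card_eq_pow_finrank]

lemma card_filter_mem_ne_zero_of_finrank_eq_one {P : Submodule F V} (hP : finrank F P = 1) :
    #{x | x ∈ P ∧ x ≠ 0} = Fintype.card F - 1 := by
  have : ({x | x ∈ P ∧ x ≠ 0} : Finset V) = ({x | x ∈ P} : Finset V).erase 0 := by
    ext x; simp [and_comm]
  rw [this, card_erase_of_mem (by simp), card_filter_mem_submodule, hP, pow_one]

lemma card_dual_apply_eq_zero [Fintype (Dual F V)] {x : V} (hx : x ≠ 0) :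
    #{f : Dual F V | f x = 0} = Fintype.card F ^ (finrank F V - 1) := by
  have hker := Dual.finrank_ker_add_one_of_ne_zero ((Module.eval_apply_eq_zero_iff F x).not.mpr hx)
  rw [Subspace.dual_finrank_eq] at hker
  rw [← Nat.eq_sub_of_add_eq hker, ← card_filter_mem_submodule]
  rfl

variable (S : Finset (Submodule F V))

noncomputable def coveredVectors : Finset V := {x | x ≠ 0 ∧ ∃ P ∈ S, x ∈ P}

variable {S}

lemma card_coveredVectors (hS : ∀ P ∈ S, finrank F P = 1) :
    #(coveredVectors S) = #S * (Fintype.card F - 1) := by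
  have : coveredVectors S = S.biUnion fun P => {x | x ∈ P ∧ x ≠ 0} := by
    ext x; simp [coveredVectors]; tauto
  rw [this, card_biUnion, sum_congr rfl fun P hP =>
    card_filter_mem_ne_zero_of_finrank_eq_one (hS P hP), sum_const, smul_eq_mul]
  intro P hP Q hQ hPQ
  simp only [Function.onFun, disjoint_left, mem_filter, mem_univ, true_and]
  exact fun x hxP hxQ => hPQ (eq_of_mem_of_finrank_eq_one (hS P hP) (hS Q hQ) hxP.1 hxQ.1 hxP.2)

lemma card_mul_sub_one_add_one_le (hS : ∀ P ∈ S, finrank F P = 1) :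
    #S * (Fintype.card F - 1) + 1 ≤ Fintype.card F ^ finrank F V := by
  rw [← card_coveredVectors hS, ← card_eq_pow_finrank, ← card_univ,
    ← card_erase_add_one (mem_univ 0)]
  gcongr
  intro x hx
  simp only [coveredVectors, mem_filter] at hx
  simp [hx.2.1]

lemma sum_card_filter_le_ker [Fintype (Dual F V)] (hS : ∀ P ∈ S, finrank F P = 1) :
    ∑ f ∈ univ.erase (0 : Dual F V), #{P ∈ S | P ≤ LinearMap.ker f}
      = #S * (Fintype.card F ^ (finrank F V - 1) - 1) := by
  simp_rw [card_filter]
  rw [sum_comm, ← smul_eq_mul, ← sum_const]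
  refine sum_congr rfl fun P hP => ?_
  obtain ⟨x, hxP, hx⟩ := exists_mem_ne_zero_of_finrank_eq_one (hS P hP)
  rw [← card_filter, ← card_dual_apply_eq_zero hx, ← card_erase_of_mem (a := 0) (by simp)]
  congr 1
  ext f
  simp [le_iff_mem_of_finrank_eq_one (hS P hP) hxP hx, and_comm]

lemma finrank_eq_of_card_eq_pow {r : ℕ} (hS : ∀ P ∈ S, finrank F P = 1)
    (hcard : #S = Fintype.card F ^ (r + 1)) (hV : finrank F V ≤ r + 2) :
    finrank F V = r + 2 := by
  have hq : 2 ≤ Fintype.card F := Fintype.one_lt_card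
  have hbound := card_mul_sub_one_add_one_le hS
  rw [hcard] at hbound
  by_contra hne
  have hle : Fintype.card F ^ finrank F V ≤ Fintype.card F ^ (r + 1) :=
    Nat.pow_le_pow_right (by omega) (by omega)
  have : Fintype.card F ^ (r + 1) ≤ Fintype.card F ^ (r + 1) * (Fintype.card F - 1) :=
    Nat.le_mul_of_pos_right _ (by omega)
  omega

lemma exists_hyperplane_forall_not_le {r : ℕ} (hS : ∀ P ∈ S, finrank F P = 1)
    (hcard : #S = Fintype.card F ^ (r + 1)) (hV : finrank F V = r + 2)
    (hdiv : ∀ H : Submodule F V, finrank F H = r + 1 →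
      Fintype.card F ^ r ∣ #{P ∈ S | P ≤ H}) :
    ∃ H : Submodule F V, finrank F H = r + 1 ∧ ∀ P ∈ S, ¬ P ≤ H := by
  have : Finite (Dual F V) := Module.finite_of_finite F
  let : Fintype (Dual F V) := Fintype.ofFinite _
  by_contra! hmeet
  have hlow : ∀ f ∈ univ.erase (0 : Dual F V),
      Fintype.card F ^ r ≤ #{P ∈ S | P ≤ LinearMap.ker f} := by
    intro f hf
    have hker : finrank F (LinearMap.ker f) = r + 1 := by
      have := Dual.finrank_ker_add_one_of_ne_zero (ne_of_mem_erase hf)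
      omega
    obtain ⟨P, hPS, hPH⟩ := hmeet _ hker
    exact Nat.le_of_dvd (card_pos.mpr ⟨P, mem_filter.mpr ⟨hPS, hPH⟩⟩) (hdiv _ hker)
  have hsum := card_nsmul_le_sum _ _ _ hlow
  rw [sum_card_filter_le_ker hS, card_erase_of_mem (mem_univ 0), card_univ,
    card_eq_pow_finrank (K := F) (V := Dual F V),
    Subspace.dual_finrank_eq, hV, hcard, smul_eq_mul] at hsum
  rw [show r + 2 - 1 = r + 1 by omega, pow_succ, pow_succ] at hsum
  have hq : 2 ≤ Fintype.card F := Fintype.one_lt_card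
  generalize Fintype.card F = q at hsum hq
  have hQ : 1 ≤ q ^ r := Nat.one_le_pow _ _ (by omega)
  generalize q ^ r = Q at hsum hQ
  have : 1 ≤ Q * q := by nlinarith
  have : 1 ≤ Q * q * q := by nlinarith
  zify [*] at hsum
  nlinarith

lemma card_filter_not_mem_of_finrank_add_one {H : Submodule F V}
    (hH : finrank F H + 1 = finrank F V) :
    #{x | x ∉ H} = Fintype.card F ^ finrank F H * (Fintype.card F - 1) := by
  have hsplit := card_filter_add_card_filter_not (s := (univ : Finset V)) (fun x => x ∈ H)
  rw [card_filter_mem_submodule, card_univ, card_eq_pow_finrank (K := F) (V := V), ← hH,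
    pow_succ] at hsplit
  rw [Nat.mul_sub_one]
  omega

lemma mem_iff_not_le_of_forall_not_le {H : Submodule F V} (hS : ∀ P ∈ S, finrank F P = 1)
    (hH : finrank F H + 1 = finrank F V) (hcard : #S = Fintype.card F ^ finrank F H)
    (hSH : ∀ P ∈ S, ¬ P ≤ H) {P : Submodule F V} (hP : finrank F P = 1) :
    P ∈ S ↔ ¬ P ≤ H := by
  have hsub : coveredVectors S ⊆ ({x | x ∉ H} : Finset V) := by
    intro x hx
    simp only [coveredVectors, mem_filter, mem_univ, true_and] at hx ⊢
    obtain ⟨hx, Q, hQS, hxQ⟩ := hx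
    exact fun hxH => hSH Q hQS ((le_iff_mem_of_finrank_eq_one (hS Q hQS) hxQ hx).mpr hxH)
  have hcovered : coveredVectors S = ({x | x ∉ H} : Finset V) :=
    eq_of_subset_of_card_le hsub <| by
      rw [card_filter_not_mem_of_finrank_add_one hH, card_coveredVectors hS, hcard]
  refine ⟨hSH P, fun hPH => ?_⟩
  obtain ⟨x, hxP, hx⟩ := exists_mem_ne_zero_of_finrank_eq_one hP
  have hxH : x ∉ H := fun hxH => hPH ((le_iff_mem_of_finrank_eq_one hP hxP hx).mpr hxH)
  have : x ∈ coveredVectors S := by rw [hcovered]; simpa using hxH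
  obtain ⟨-, Q, hQS, hxQ⟩ := (mem_filter.mp this).2
  rwa [← eq_of_mem_of_finrank_eq_one (hS Q hQS) hP hxQ hxP hx]

end

theorem stmt7_general (q v r : ℕ) (hv : v ≤ r + 2)
    (F : Type) [Field F] [Fintype F] (hF : Fintype.card F = q)
    (S : Finset (Submodule F (Fin v → F))) (hpts : ∀ P ∈ S, finrank F P = 1)
    (hcard : S.card = q ^ (r + 1))
    (hdiv : ∀ H : Submodule F (Fin v → F), finrank F H = v - 1 →
      q ^ r ∣ (S.filter fun P => P ≤ H).card) :
    v = r + 2 ∧ ∃ H : Submodule F (Fin v → F), finrank F H = v - 1 ∧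
      ∀ P : Submodule F (Fin v → F), finrank F P = 1 → (P ∈ S ↔ ¬ P ≤ H) := by
  subst hF
  have hdim : finrank F (Fin v → F) = v := finrank_fin_fun F
  obtain rfl : v = r + 2 := hdim ▸ finrank_eq_of_card_eq_pow hpts hcard (hdim.trans_le hv)
  obtain ⟨H, hH, hSH⟩ := exists_hyperplane_forall_not_le hpts hcard hdim hdiv
  refine ⟨rfl, H, hH, fun P hP => mem_iff_not_le_of_forall_not_le hpts ?_ ?_ hSH hP⟩
  · rw [hH, hdim]
  · rw [hcard, hH]

/-- a `q^r`-divisible spanning set of `q^(r+1)` points in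
`PG(v-1,q)` with `v ≤ r+2` forces `v = r+2`, and then `S` is the complement of a
hyperplane, i.e. the points of an affine space `AG(r+1,q)`. -/
theorem stmt7 (q v r : ℕ) (hv : v ≤ r + 2)
    (F : Type) [Field F] [Fintype F] (hF : Fintype.card F = q)
    (S : Finset (Submodule F (Fin v → F))) (hpts : ∀ P ∈ S, finrank F P = 1)
    (hcard : S.card = q ^ (r + 1))
    (hdiv : ∀ H : Submodule F (Fin v → F), finrank F H = v - 1 →
      q ^ r ∣ (S.filter fun P => P ≤ H).card)
    (hspan : (⨆ P ∈ S, P) = (⊤ : Submodule F (Fin v → F))) :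
    v = r + 2 ∧ ∃ H : Submodule F (Fin v → F), finrank F H = v - 1 ∧
      ∀ P : Submodule F (Fin v → F), finrank F P = 1 → (P ∈ S ↔ ¬ P ≤ H) :=
  stmt7_general q v r hv F hF S hpts hcard hdiv
end

section
/- If the generalized cylinder conjecture is true for (v+1, r+1, q), then it is true for (v, r, q). Concretely: if S is a q^r-divisible spanning set of q^{r+1} points in PG(v-1,q) which is not an (r+1)-cylinder, then the cone S' = {A(P, S) : S ∈ S} over S with apex a new point P in PG(v,q) is a q^{r+1}-divisible spanning set of q^{r+2} points which is not an (r+2)-cylinder. -/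
open Module
open scoped Classical

/-- `S` is the point set of a cylinder inside the subspace `T` of `PG(v'-1,q)`:
there are an `rr`-dimensional subspace `Fs` and `q` subspaces `L i` of dimension
`rr + 1`, all containing `Fs`, such that `S` consists exactly of the points of
the affine spaces `L i \ Fs`.  (For an `(r+1)`-cylinder take `rr = r`.) -/
def IsCylinderIn (q rr v' : ℕ) {F : Type} [Field F]
    (T : Submodule F (Fin v' → F)) (S : Set (Submodule F (Fin v' → F))) : Prop :=
  ∃ (Fs : Submodule F (Fin v' → F)) (L : Fin q → Submodule F (Fin v' → F)),
    Module.finrank F Fs = rr ∧ Fs ≤ T ∧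
    (∀ i, Module.finrank F (L i) = rr + 1 ∧ Fs ≤ L i ∧ L i ≤ T) ∧
    ∀ P : Submodule F (Fin v' → F), Module.finrank F P = 1 →
      (P ∈ S ↔ ∃ i, P ≤ L i ∧ ¬ P ≤ Fs)

/-!
The cone `S'` is the disjoint union of the affine lines `A(P, P0)`, `P ∈ S`, each with `q`
points, so `|S'| = q * |S|`. A hyperplane `H` through `P0` meets `S'` in the lines over the
points of `S` in the hyperplane `H ∩ V0` of `V0`, i.e. in `q` times a multiple of `q^r` points;
a hyperplane missing `P0` meets every line `⟨P, P0⟩` in a single point, so it meets `S'` in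
`|S| = q^(r+1)` points. Finally `S' ∩ V0 = S`, so a cylinder structure on `S'` with vertex `Fs`
restricts to one on `S` when `Fs ⊄ V0`, while for `Fs ≤ V0` counting forces `S = V0 \ Fs`, and
an affine space is itself a cylinder.
-/

lemma Set.ncard_biUnion_of_ncard_eq {ι α : Type*} {t : Set ι} (ht : t.Finite) {s : ι → Set α}
    (hs : ∀ i ∈ t, (s i).Finite) (h : t.PairwiseDisjoint s) {k : ℕ}
    (hk : ∀ i ∈ t, (s i).ncard = k) : (⋃ i ∈ t, s i).ncard = t.ncard * k := by
  rw [ht.ncard_biUnion hs h, finsum_mem_congr rfl hk, ← finsum_one, finsum_mem_mul]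
  simp

namespace Submodule

variable {F V : Type*} [Field F] [AddCommGroup V] [Module F V]

lemma eq_of_le_of_finrank_eq_one {P Q : Submodule F V} (hP : finrank F P = 1)
    (hQ : finrank F Q = 1) (h : P ≤ Q) : P = Q :=
  ((isAtom_iff_finrank_eq_one.2 hQ).le_iff_eq (isAtom_iff_finrank_eq_one.2 hP).ne_bot).1 h

lemma exists_sup_span_singleton_eq {U : Submodule F V} (hU : U ≠ ⊥) :
    ∃ (W : Submodule F V) (x : V), x ∉ W ∧ W ⊔ span F {x} = U := by
  obtain ⟨x, hxU, hx0⟩ := U.ne_bot_iff.1 hU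
  obtain ⟨C, hC⟩ := (span F {x}).exists_isCompl
  refine ⟨U ⊓ C, x, fun hx => hx0 ?_, ?_⟩
  · exact (disjoint_span_singleton.1 hC.symm.disjoint) (mem_inf.1 hx).2
  · rw [inf_sup_assoc_of_le C ((span_singleton_le_iff_mem x U).2 hxU), sup_comm,
      hC.sup_eq_top, inf_top_eq]

lemma exists_mem_sup_span_add_smul_iff {U : Submodule F V} {x y p : V} (hy : y ∉ U ⊔ span F {x}) :
    (∃ c : F, p ∈ U ⊔ span F {y + c • x} ∧ p ∉ U) ↔
      p ∈ U ⊔ span F {x} ⊔ span F {y} ∧ p ∉ U ⊔ span F {x} := by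
  constructor
  · rintro ⟨c, hp, hpU⟩
    obtain ⟨u, hu, w, hw, rfl⟩ := mem_sup.1 hp
    obtain ⟨t, rfl⟩ := mem_span_singleton.1 hw
    have ht : t ≠ 0 := by
      rintro rfl
      exact hpU (by simpa using hu)
    have hsplit : u + t • (y + c • x) = (u + (t * c) • x) + t • y := by
      rw [smul_add, smul_smul]
      abel
    refine ⟨hsplit ▸ add_mem_sup (add_mem_sup hu (smul_mem _ _ (mem_span_singleton_self x)))
      (smul_mem _ _ (mem_span_singleton_self y)), fun h => hy ((smul_mem_iff _ ht).1 ?_)⟩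
    have hty : t • y = (u + t • (y + c • x)) - u - (t * c) • x := by
      rw [smul_add, smul_smul]
      abel
    rw [hty]
    exact sub_mem (sub_mem h (mem_sup_left hu))
      (mem_sup_right (smul_mem _ _ (mem_span_singleton_self x)))
  · rintro ⟨hp, hpUx⟩
    obtain ⟨g, hg, w, hw, rfl⟩ := mem_sup.1 hp
    obtain ⟨b, rfl⟩ := mem_span_singleton.1 hw
    obtain ⟨u, hu, w', hw', rfl⟩ := mem_sup.1 hg
    obtain ⟨a, rfl⟩ := mem_span_singleton.1 hw'
    have hb : b ≠ 0 := by
      rintro rfl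
      exact hpUx (by simpa using hg)
    have hsplit : u + a • x + b • y = u + b • (y + (b⁻¹ * a) • x) := by
      rw [smul_add, smul_smul, mul_inv_cancel_left₀ hb]
      abel
    exact ⟨b⁻¹ * a, hsplit ▸ add_mem_sup hu (smul_mem _ _ (mem_span_singleton_self _)),
      fun h => hpUx (mem_sup_left h)⟩

variable [FiniteDimensional F V]

lemma finrank_sup_eq_two {P Q : Submodule F V} (hP : finrank F P = 1) (hQ : finrank F Q = 1)
    (hPQ : P ≠ Q) : finrank F ↥(P ⊔ Q) = 2 := by
  have h := finrank_sup_add_finrank_inf_eq P Q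
  rw [((isAtom_iff_finrank_eq_one.2 hP).disjoint_of_ne (isAtom_iff_finrank_eq_one.2 hQ)
    hPQ).eq_bot, finrank_bot, hP, hQ] at h
  omega

lemma sup_eq_top_of_not_le {H B : Submodule F V} (hH : finrank F H + 1 = finrank F V)
    (hB : ¬ B ≤ H) : H ⊔ B = ⊤ := by
  have hlt : finrank F H < finrank F ↥(H ⊔ B) :=
    finrank_lt_finrank_of_lt (left_lt_sup.2 hB)
  exact eq_top_of_finrank_eq (le_antisymm (finrank_le _) (by omega))

lemma finrank_inf_add_one_of_not_le {H B : Submodule F V} (hH : finrank F H + 1 = finrank F V)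
    (hB : ¬ B ≤ H) : finrank F ↥(B ⊓ H) + 1 = finrank F B := by
  have h := finrank_sup_add_finrank_inf_eq H B
  rw [sup_eq_top_of_not_le hH hB, finrank_top, inf_comm] at h
  omega

end Submodule

section Counting

variable {F V : Type*} [Field F] [Fintype F] [AddCommGroup V] [Module F V]
  [FiniteDimensional F V]

instance Submodule.finite_of_finite : Finite (Submodule F V) :=
  have := Module.finite_of_finite F (M := V)
  Finite.of_injective _ SetLike.coe_injective

lemma Submodule.ncard_coe (U : Submodule F V) :
    (U : Set V).ncard = Fintype.card F ^ finrank F U := by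
  have := Module.finite_of_finite F (M := V)
  have := Fintype.ofFinite U
  rw [← Nat.card_coe_set_eq, SetLike.coe_sort_coe, Nat.card_eq_fintype_card]
  exact Module.card_eq_pow_finrank

/-- Every vector of `U \ U'` is a nonzero vector of exactly one point, and each point has
`q - 1` nonzero vectors: `#points * (q - 1) = q ^ (n + 1) - q ^ n`. -/
lemma Submodule.ncard_points_le_not_le {U U' : Submodule F V} (hle : U' ≤ U)
    (hU : finrank F U = finrank F U' + 1) :
    {P : Submodule F V | finrank F P = 1 ∧ P ≤ U ∧ ¬ P ≤ U'}.ncard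
      = Fintype.card F ^ finrank F U' := by
  have := Module.finite_of_finite F (M := V)
  set pts := {P : Submodule F V | finrank F P = 1 ∧ P ≤ U ∧ ¬ P ≤ U'}
  have hunion : (U : Set V) \ U' = ⋃ P ∈ pts, (P : Set V) \ {0} := by
    ext x
    simp only [Set.mem_sdiff, Set.mem_iUnion, SetLike.mem_coe, Set.mem_singleton_iff]
    constructor
    · rintro ⟨hxU, hxU'⟩
      have hx0 : x ≠ 0 := by rintro rfl; exact hxU' U'.zero_mem
      refine ⟨span F {x}, ⟨finrank_span_singleton hx0, (span_singleton_le_iff_mem x U).2 hxU,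
        fun h => hxU' ((span_singleton_le_iff_mem x U').1 h)⟩, mem_span_singleton_self x, hx0⟩
    · rintro ⟨P, ⟨hP, hPU, hPU'⟩, hxP, hx0⟩
      refine ⟨hPU hxP, fun hxU' => hPU' ?_⟩
      rw [eq_span_singleton_of_mem_of_finrank_eq_one hP hxP hx0]
      exact (span_singleton_le_iff_mem x U').2 hxU'
  have hdisj : pts.PairwiseDisjoint fun P => (P : Set V) \ {0} := by
    intro P hP Q hQ hPQ
    refine Set.disjoint_left.2 fun x ⟨hxP, hx0⟩ ⟨hxQ, _⟩ => hPQ ?_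
    rw [eq_span_singleton_of_mem_of_finrank_eq_one hP.1 hxP hx0,
      eq_span_singleton_of_mem_of_finrank_eq_one hQ.1 hxQ hx0]
  have hq : 1 < Fintype.card F := Fintype.one_lt_card
  have hcount := Set.ncard_biUnion_of_ncard_eq (Set.toFinite pts) (fun _ _ => Set.toFinite _)
    hdisj (k := Fintype.card F - 1) fun P hP => by
      rw [Set.ncard_sdiff_singleton_of_mem (zero_mem P), Submodule.ncard_coe, hP.1, pow_one]
  rw [← hunion, Set.ncard_sdiff (SetLike.coe_subset_coe.2 hle), Submodule.ncard_coe,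
    Submodule.ncard_coe, hU, pow_succ, ← Nat.mul_sub_one] at hcount
  exact (Nat.eq_of_mul_eq_mul_right (by omega) hcount).symm

end Counting

section Cone

variable {F V : Type*} [Field F] [AddCommGroup V] [Module F V]

/-- The affine line `A(P, P0) = ⟨P, P0⟩ \ {P0}`. -/
def affineLine (P0 P : Submodule F V) : Set (Submodule F V) :=
  {Q | finrank F Q = 1 ∧ Q ≠ P0 ∧ Q ≤ P ⊔ P0}

/-- The set `S' = ⋃ P ∈ S, A(P, P0)` of the paper. -/
def cone (P0 : Submodule F V) (S : Set (Submodule F V)) : Set (Submodule F V) :=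
  {Q | finrank F Q = 1 ∧ Q ≠ P0 ∧ ∃ P ∈ S, Q ≤ P ⊔ P0}

lemma cone_eq_biUnion (P0 : Submodule F V) (S : Set (Submodule F V)) :
    cone P0 S = ⋃ P ∈ S, affineLine P0 P := by
  ext Q
  simp only [cone, affineLine, Set.mem_ofPred_eq, Set.mem_iUnion]
  constructor
  · rintro ⟨h1, h2, P, hP, h3⟩; exact ⟨P, hP, h1, h2, h3⟩
  · rintro ⟨P, hP, h1, h2, h3⟩; exact ⟨h1, h2, P, hP, h3⟩

variable {P0 V0 : Submodule F V} {S : Set (Submodule F V)}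

lemma sup_inf_eq_of_le {P : Submodule F V} (hP0 : finrank F P0 = 1) (hP0V0 : ¬ P0 ≤ V0)
    (hP : P ≤ V0) : (P ⊔ P0) ⊓ V0 = P := by
  rw [sup_inf_assoc_of_le P0 hP,
    ((Submodule.isAtom_iff_finrank_eq_one.2 hP0).not_le_iff_disjoint.1 hP0V0).eq_bot, sup_bot_eq]

lemma sup_inf_sup_eq {P P' : Submodule F V} (hP0 : finrank F P0 = 1) (hP0V0 : ¬ P0 ≤ V0)
    (hP : finrank F P = 1) (hP' : finrank F P' = 1) (hPV0 : P ≤ V0) (hP'V0 : P' ≤ V0)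
    (hPP' : P ≠ P') : (P ⊔ P0) ⊓ (P' ⊔ P0) = P0 := by
  have hdisj : P ⊓ (P' ⊔ P0) = ⊥ := by
    calc P ⊓ (P' ⊔ P0) = P ⊓ ((P' ⊔ P0) ⊓ V0) := by
          rw [inf_comm _ V0, ← inf_assoc, inf_of_le_left hPV0]
      _ = ⊥ := by
        rw [sup_inf_eq_of_le hP0 hP0V0 hP'V0]
        exact ((Submodule.isAtom_iff_finrank_eq_one.2 hP).disjoint_of_ne
          (Submodule.isAtom_iff_finrank_eq_one.2 hP') hPP').eq_bot
  rw [sup_comm, sup_inf_assoc_of_le P le_sup_right, hdisj, sup_bot_eq]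

lemma ne_of_mem_of_not_le {P : Submodule F V} (hP0V0 : ¬ P0 ≤ V0)
    (hS : ∀ P ∈ S, finrank F P = 1 ∧ P ≤ V0) (hP : P ∈ S) : P ≠ P0 :=
  fun h => hP0V0 (h ▸ (hS P hP).2)

lemma mem_cone_of_mem {P : Submodule F V} (hP0V0 : ¬ P0 ≤ V0)
    (hS : ∀ P ∈ S, finrank F P = 1 ∧ P ≤ V0) (hP : P ∈ S) : P ∈ cone P0 S :=
  ⟨(hS P hP).1, ne_of_mem_of_not_le hP0V0 hS hP, P, hP, le_sup_left⟩

lemma mem_of_mem_cone_of_le {Q : Submodule F V} (hP0 : finrank F P0 = 1) (hP0V0 : ¬ P0 ≤ V0)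
    (hS : ∀ P ∈ S, finrank F P = 1 ∧ P ≤ V0) (hQ : Q ∈ cone P0 S) (hQV0 : Q ≤ V0) : Q ∈ S := by
  obtain ⟨hQ1, -, P, hP, hQP⟩ := hQ
  have hQP : Q ≤ P := sup_inf_eq_of_le hP0 hP0V0 (hS P hP).2 ▸ le_inf hQP hQV0
  rwa [Submodule.eq_of_le_of_finrank_eq_one hQ1 (hS P hP).1 hQP]

lemma pairwiseDisjoint_affineLine (hP0 : finrank F P0 = 1) (hP0V0 : ¬ P0 ≤ V0)
    (hS : ∀ P ∈ S, finrank F P = 1 ∧ P ≤ V0) : S.PairwiseDisjoint (affineLine P0) := by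
  intro P hP P' hP' hPP'
  refine Set.disjoint_left.2 fun Q hQ hQ' => hQ.2.1 ?_
  refine Submodule.eq_of_le_of_finrank_eq_one hQ.1 hP0 ?_
  rw [← sup_inf_sup_eq hP0 hP0V0 (hS P hP).1 (hS P' hP').1 (hS P hP).2 (hS P' hP').2 hPP']
  exact le_inf hQ.2.2 hQ'.2.2

end Cone

section ConeCounting

variable {F V : Type*} [Field F] [AddCommGroup V] [Module F V] [FiniteDimensional F V]
  {P0 V0 : Submodule F V} {S : Set (Submodule F V)}

lemma sup_eq_of_mem_affineLine {P Q : Submodule F V} (hP0 : finrank F P0 = 1)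
    (hP : finrank F P = 1) (hPP0 : P ≠ P0) (hQ : Q ∈ affineLine P0 P) : Q ⊔ P0 = P ⊔ P0 :=
  Submodule.eq_of_le_of_finrank_le (sup_le hQ.2.2 le_sup_right) (by
    rw [Submodule.finrank_sup_eq_two hP hP0 hPP0, Submodule.finrank_sup_eq_two hQ.1 hP0 hQ.2.1])

lemma ncard_cone_inter_of_not_le (hP0 : finrank F P0 = 1) (hP0V0 : ¬ P0 ≤ V0)
    (hS : ∀ P ∈ S, finrank F P = 1 ∧ P ≤ V0) {H : Submodule F V}
    (hH : finrank F H + 1 = finrank F V) (hP0H : ¬ P0 ≤ H) :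
    (cone P0 S ∩ {Q | Q ≤ H}).ncard = S.ncard := by
  have hpt : ∀ P ∈ S, finrank F ↥((P ⊔ P0) ⊓ H) = 1 := fun P hP => by
    have := Submodule.finrank_inf_add_one_of_not_le (B := P ⊔ P0) hH
      fun h => hP0H (le_sup_right.trans h)
    rw [Submodule.finrank_sup_eq_two (hS P hP).1 hP0 (ne_of_mem_of_not_le hP0V0 hS hP)] at this
    omega
  have himage : cone P0 S ∩ {Q | Q ≤ H} = (fun P => (P ⊔ P0) ⊓ H) '' S := by
    ext Q
    constructor
    · rintro ⟨⟨hQ, -, P, hP, hQP⟩, hQH⟩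
      exact ⟨P, hP, (Submodule.eq_of_le_of_finrank_eq_one hQ (hpt P hP) (le_inf hQP hQH)).symm⟩
    · rintro ⟨P, hP, rfl⟩
      have hPH : (P ⊔ P0) ⊓ H ≤ H := inf_le_right
      exact ⟨⟨hpt P hP, fun h => hP0H (h ▸ hPH), P, hP, inf_le_left⟩, hPH⟩
  have hinj : Set.InjOn (fun P => (P ⊔ P0) ⊓ H) S := by
    intro P hP P' hP' h
    by_contra hPP'
    have h : (P ⊔ P0) ⊓ H = (P' ⊔ P0) ⊓ H := h
    have hle : (P ⊔ P0) ⊓ H ≤ P0 := (le_inf inf_le_left (h.le.trans inf_le_left)).trans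
      (sup_inf_sup_eq hP0 hP0V0 (hS P hP).1 (hS P' hP').1 (hS P hP).2 (hS P' hP').2 hPP').le
    apply hP0H
    rw [← Submodule.eq_of_le_of_finrank_eq_one (hpt P hP) hP0 hle]
    exact inf_le_right
  rw [himage, hinj.ncard_image]

variable [Fintype F]

lemma ncard_affineLine {P : Submodule F V} (hP0 : finrank F P0 = 1) (hP : finrank F P = 1)
    (hPP0 : P ≠ P0) : (affineLine P0 P).ncard = Fintype.card F := by
  have h : affineLine P0 P = {Q : Submodule F V | finrank F Q = 1 ∧ Q ≤ P ⊔ P0 ∧ ¬ Q ≤ P0} := by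
    ext Q
    refine and_congr_right fun hQ => ?_
    rw [and_comm]
    exact and_congr_right fun _ =>
      ⟨fun hne hle => hne (Submodule.eq_of_le_of_finrank_eq_one hQ hP0 hle), fun h he => h he.le⟩
  rw [h, Submodule.ncard_points_le_not_le le_sup_right 
    (by rw [Submodule.finrank_sup_eq_two hP hP0 hPP0, hP0]),
    hP0, pow_one]

lemma ncard_cone_inter_of_le (hP0 : finrank F P0 = 1) (hP0V0 : ¬ P0 ≤ V0)
    (hS : ∀ P ∈ S, finrank F P = 1 ∧ P ≤ V0) {H : Submodule F V} (hP0H : P0 ≤ H) :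
    (cone P0 S ∩ {Q | Q ≤ H}).ncard = (S ∩ {P | P ≤ H}).ncard * Fintype.card F := by
  have h : cone P0 S ∩ {Q | Q ≤ H} = ⋃ P ∈ S ∩ {P | P ≤ H}, affineLine P0 P := by
    ext Q
    simp only [cone_eq_biUnion, Set.mem_inter_iff, Set.mem_iUnion, Set.mem_ofPred_eq]
    constructor
    · rintro ⟨⟨P, hP, hQ⟩, hQH⟩
      refine ⟨P, ⟨hP, ?_⟩, hQ⟩
      exact le_sup_left.trans ((sup_eq_of_mem_affineLine hP0 (hS P hP).1
        (ne_of_mem_of_not_le hP0V0 hS hP) hQ).ge.trans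
        (sup_le hQH hP0H))
    · rintro ⟨P, ⟨hP, hPH⟩, hQ⟩
      exact ⟨⟨P, hP, hQ⟩, hQ.2.2.trans (sup_le hPH hP0H)⟩
  rw [h, Set.ncard_biUnion_of_ncard_eq (Set.toFinite _) (fun _ _ => Set.toFinite _)
    ((pairwiseDisjoint_affineLine hP0 hP0V0 hS).subset Set.inter_subset_left)
    fun P hP => ncard_affineLine hP0 (hS P hP.1).1 (ne_of_mem_of_not_le hP0V0 hS hP.1)]

lemma ncard_cone (hP0 : finrank F P0 = 1) (hP0V0 : ¬ P0 ≤ V0)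
    (hS : ∀ P ∈ S, finrank F P = 1 ∧ P ≤ V0) :
    (cone P0 S).ncard = S.ncard * Fintype.card F := by
  rw [cone_eq_biUnion, Set.ncard_biUnion_of_ncard_eq (Set.toFinite _) (fun _ _ => Set.toFinite _)
    (pairwiseDisjoint_affineLine hP0 hP0V0 hS)
    fun P hP => ncard_affineLine hP0 (hS P hP).1 (ne_of_mem_of_not_le hP0V0 hS hP)]

lemma dvd_ncard_cone_inter (hP0 : finrank F P0 = 1) (hP0V0 : ¬ P0 ≤ V0)
    (hS : ∀ P ∈ S, finrank F P = 1 ∧ P ≤ V0) (hV0 : finrank F V0 + 1 = finrank F V) {m : ℕ}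
    (hdiv : ∀ K ≤ V0, finrank F K + 1 = finrank F V0 → m ∣ (S ∩ {P | P ≤ K}).ncard)
    (hSm : m * Fintype.card F ∣ S.ncard) {H : Submodule F V}
    (hH : finrank F H + 1 = finrank F V) :
    m * Fintype.card F ∣ (cone P0 S ∩ {Q | Q ≤ H}).ncard := by
  by_cases hP0H : P0 ≤ H
  · have hHV0 : ¬ H ≤ V0 := fun h => hP0V0 (hP0H.trans h)
    have hSH : S ∩ {P | P ≤ H} = S ∩ {P | P ≤ H ⊓ V0} := by
      ext P
      exact and_congr_right fun hP =>
        ⟨fun h : P ≤ H => le_inf h (hS P hP).2, fun h : P ≤ H ⊓ V0 => h.trans inf_le_left⟩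
    rw [ncard_cone_inter_of_le hP0 hP0V0 hS hP0H, hSH]
    refine Nat.mul_dvd_mul_right (hdiv _ inf_le_right ?_) _
    have := Submodule.finrank_inf_add_one_of_not_le hV0 hHV0
    omega
  · rwa [ncard_cone_inter_of_not_le hP0 hP0V0 hS hH hP0H]

lemma sSup_cone_eq_top (hP0 : finrank F P0 = 1) (hP0V0 : ¬ P0 ≤ V0)
    (hS : ∀ P ∈ S, finrank F P = 1 ∧ P ≤ V0) (hV0 : finrank F V0 + 1 = finrank F V)
    (hSV0 : sSup S = V0) (hSne : S.Nonempty) : sSup (cone P0 S) = ⊤ := by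
  obtain ⟨P, hP⟩ := hSne
  have hline : 1 < (affineLine P0 P).ncard := by
    rw [ncard_affineLine hP0 (hS P hP).1 (ne_of_mem_of_not_le hP0V0 hS hP)]
    exact Fintype.one_lt_card
  obtain ⟨Q, hQ, hQP⟩ := Set.exists_ne_of_one_lt_ncard hline P
  have hQcone : Q ∈ cone P0 S := by
    rw [cone_eq_biUnion]
    exact Set.mem_biUnion hP hQ
  have hQV0 : ¬ Q ≤ V0 := fun h =>
    hQP (Submodule.eq_of_le_of_finrank_eq_one hQ.1 (hS P hP).1
      (sup_inf_eq_of_le hP0 hP0V0 (hS P hP).2 ▸ le_inf hQ.2.2 h))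
  rw [eq_top_iff, ← Submodule.sup_eq_top_of_not_le hV0 hQV0]
  refine sup_le ?_ (le_sSup hQcone)
  exact hSV0 ▸ sSup_le_sSup fun P hP => mem_cone_of_mem hP0V0 hS hP

end ConeCounting

section Cylinder

variable {F : Type} [Field F] {n q r : ℕ}

lemma isCylinderIn_of_inf_hyperplane {H Fs : Submodule F (Fin n → F)}
    {L : Fin q → Submodule F (Fin n → F)} {Y : Set (Submodule F (Fin n → F))}
    (hH : finrank F H + 1 = n) (hFs : finrank F Fs = r + 1)
    (hL : ∀ i, finrank F (L i) = r + 2 ∧ Fs ≤ L i) (hFsH : ¬ Fs ≤ H)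
    (hY : ∀ P : Submodule F (Fin n → F), finrank F P = 1 →
      (P ∈ Y ↔ P ≤ H ∧ ∃ i, P ≤ L i ∧ ¬ P ≤ Fs)) :
    IsCylinderIn q r n H Y := by
  replace hH : finrank F H + 1 = finrank F (Fin n → F) := by rw [hH, Module.finrank_fin_fun]
  refine ⟨Fs ⊓ H, fun i => L i ⊓ H, ?_, inf_le_right,
    fun i => ⟨?_, inf_le_inf_right H (hL i).2, inf_le_right⟩, fun P hP => ?_⟩
  · have := Submodule.finrank_inf_add_one_of_not_le hH hFsH
    omega
  · have := Submodule.finrank_inf_add_one_of_not_le hH fun h => hFsH ((hL i).2.trans h)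
    rw [(hL i).1] at this
    exact Nat.succ_injective this
  · rw [hY P hP]
    constructor
    · rintro ⟨hPH, i, hPL, hPFs⟩
      exact ⟨i, le_inf hPL hPH, fun h => hPFs (h.trans inf_le_left)⟩
    · rintro ⟨i, hPL, hPFs⟩
      have hPH : P ≤ H := hPL.trans inf_le_right
      exact ⟨hPH, i, hPL.trans inf_le_left, fun h => hPFs (le_inf h hPH)⟩

open Submodule in
/-- An affine space `W \ Fs` is a cylinder: write `Fs = U ⊔ ⟨x⟩` and `W = Fs ⊔ ⟨y⟩`, and take
the `q` subspaces `U ⊔ ⟨y + c • x⟩`, `c ∈ F`. -/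
lemma isCylinderIn_of_affine [Fintype F] (hF : Fintype.card F = q)
    {W Fs : Submodule F (Fin n → F)} {X : Set (Submodule F (Fin n → F))} (hFsW : Fs ≤ W)
    (hFs : finrank F Fs = r + 1) (hW : finrank F W = r + 2)
    (hX : ∀ P : Submodule F (Fin n → F), finrank F P = 1 → (P ∈ X ↔ P ≤ W ∧ ¬ P ≤ Fs)) :
    IsCylinderIn q r n W X := by
  obtain ⟨U, x, hxU, hUx⟩ := exists_sup_span_singleton_eq (F := F) (U := Fs)
    fun h => by rw [h, finrank_bot] at hFs; omega
  have hU : finrank F U = r := by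
    have := finrank_sup_span_singleton hxU
    rw [hUx] at this
    omega
  have hUFs : U ≤ Fs := hUx ▸ le_sup_left
  have hxFs : x ∈ Fs := hUx ▸ mem_sup_right (mem_span_singleton_self x)
  obtain ⟨y, hyW, hyFs⟩ := SetLike.exists_of_lt
    (lt_of_le_of_ne hFsW fun h => by rw [h, hW] at hFs; omega)
  have hFsy : Fs ⊔ span F {y} = W := eq_of_le_of_finrank_le
    (sup_le hFsW ((span_singleton_le_iff_mem y W).2 hyW))
    (by rw [finrank_sup_span_singleton hyFs]; omega)
  let e : Fin q ≃ F := (Fintype.equivFinOfCardEq hF).symm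
  refine ⟨U, fun i => U ⊔ span F {y + e i • x}, hU, hUFs.trans hFsW,
    fun i => ⟨?_, le_sup_left, sup_le (hUFs.trans hFsW) ?_⟩, fun P hP => ?_⟩
  · rw [finrank_sup_span_singleton, hU]
    intro h
    exact hyFs (by simpa using sub_mem (hUFs h) (smul_mem Fs (e i) hxFs))
  · exact (span_singleton_le_iff_mem _ W).2 (add_mem hyW (smul_mem _ _ (hFsW hxFs)))
  · obtain ⟨p, hpP, hp0⟩ := P.ne_bot_iff.1 (isAtom_iff_finrank_eq_one.2 hP).ne_bot
    rw [hX P hP, eq_span_singleton_of_mem_of_finrank_eq_one hP hpP hp0]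
    simp only [span_singleton_le_iff_mem]
    rw [← hFsy, ← hUx, ← exists_mem_sup_span_add_smul_iff (hUx ▸ hyFs)]
    exact ⟨fun ⟨c, h⟩ => ⟨e.symm c, by simpa using h⟩, fun ⟨i, h⟩ => ⟨e i, h⟩⟩

lemma not_isCylinderIn_cone [Fintype F] (hF : Fintype.card F = q) {P0 V0 : Submodule F (Fin n → F)}
    {S : Set (Submodule F (Fin n → F))} (hP0 : finrank F P0 = 1) (hP0V0 : ¬ P0 ≤ V0)
    (hS : ∀ P ∈ S, finrank F P = 1 ∧ P ≤ V0) (hV0 : finrank F V0 + 1 = n)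
    (hcard : S.ncard = q ^ (r + 1)) (hSV0 : sSup S = V0)
    (hnotcyl : ¬ IsCylinderIn q r n V0 S) : ¬ IsCylinderIn q (r + 1) n ⊤ (cone P0 S) := by
  rintro ⟨Fs, L, hFs, -, hL, hcone⟩
  have hSiff : ∀ P : Submodule F (Fin n → F), finrank F P = 1 →
      (P ∈ S ↔ P ≤ V0 ∧ ∃ i, P ≤ L i ∧ ¬ P ≤ Fs) := fun P hP => by
    rw [← hcone P hP]
    exact ⟨fun h => ⟨(hS P h).2, mem_cone_of_mem hP0V0 hS h⟩,
      fun h => mem_of_mem_cone_of_le hP0 hP0V0 hS h.2 h.1⟩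
  by_cases hFsV0 : Fs ≤ V0
  swap
  · exact hnotcyl (isCylinderIn_of_inf_hyperplane hV0 hFs (fun i => ⟨(hL i).1, (hL i).2.1⟩)
      hFsV0 hSiff)
  obtain ⟨P, hP⟩ := Set.nonempty_of_ncard_ne_zero (s := S)
    (by rw [hcard, ← hF]; exact pow_ne_zero _ Fintype.card_ne_zero)
  obtain ⟨i, hPL, hPFs⟩ := ((hSiff P (hS P hP).1).1 hP).2
  have hLV0 : L i ≤ V0 := by
    by_contra hLV0
    replace hV0 : finrank F V0 + 1 = finrank F (Fin n → F) := by rw [hV0, Module.finrank_fin_fun]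
    have hdim := Submodule.finrank_inf_add_one_of_not_le hV0 hLV0
    rw [(hL i).1] at hdim
    have hFsL : Fs = L i ⊓ V0 :=
      Submodule.eq_of_le_of_finrank_le (le_inf (hL i).2.1 hFsV0) (by omega)
    exact hPFs (hFsL ▸ le_inf hPL (hS P hP).2)
  set X := {Q : Submodule F (Fin n → F) | finrank F Q = 1 ∧ Q ≤ L i ∧ ¬ Q ≤ Fs}
  have hXS : X = S := by
    refine Set.eq_of_subset_of_ncard_le (fun Q ⟨hQ, hQL, hQFs⟩ =>
      (hSiff Q hQ).2 ⟨hQL.trans hLV0, i, hQL, hQFs⟩) ?_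
    rw [Submodule.ncard_points_le_not_le (hL i).2.1 (by rw [(hL i).1, hFs]), hFs, hF, hcard]
  have hLeq : L i = V0 :=
    le_antisymm hLV0 (hSV0 ▸ sSup_le fun Q hQ => (hXS ▸ hQ : Q ∈ X).2.1)
  refine hnotcyl (isCylinderIn_of_affine hF hFsV0 hFs (hLeq ▸ (hL i).1) fun Q hQ => ?_)
  rw [← hXS, ← hLeq]
  exact and_iff_right hQ

end Cylinder

/-- if `S` is a `q^r`-divisible spanning set of `q^(r+1)` points in
a hyperplane `V0` of `PG(v,q)` which is not an `(r+1)`-cylinder, then the cone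
`S' = {A(P, P0) : P ∈ S}` over `S` with apex a point `P0 ∉ V0` is a
`q^(r+1)`-divisible spanning set of `q^(r+2)` points of `PG(v,q)` which is not an
`(r+2)`-cylinder.  (Hence truth of the generalized cylinder conjecture for
`(v+1, r+1, q)` implies it for `(v, r, q)`.) -/
theorem stmt8 (q v r : ℕ) (F : Type) [Field F] [Fintype F] (hF : Fintype.card F = q)
    (V0 : Submodule F (Fin (v + 1) → F)) (hV0 : finrank F V0 = v)
    (P0 : Submodule F (Fin (v + 1) → F)) (hP0 : finrank F P0 = 1) (hP0V0 : ¬ P0 ≤ V0)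
    (S : Set (Submodule F (Fin (v + 1) → F)))
    (hpts : ∀ P ∈ S, finrank F P = 1 ∧ P ≤ V0)
    (hcard : S.ncard = q ^ (r + 1))
    (hdiv : ∀ K : Submodule F (Fin (v + 1) → F), K ≤ V0 → finrank F K = v - 1 →
      q ^ r ∣ (S ∩ {P | P ≤ K}).ncard)
    (hspan : sSup S = V0)
    (hnotcyl : ¬ IsCylinderIn q r (v + 1) V0 S) :
    ({Q : Submodule F (Fin (v + 1) → F) |
        finrank F Q = 1 ∧ Q ≠ P0 ∧ ∃ P ∈ S, Q ≤ P ⊔ P0}.ncard = q ^ (r + 2)) ∧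
    (∀ H : Submodule F (Fin (v + 1) → F), finrank F H = v →
      q ^ (r + 1) ∣ ({Q : Submodule F (Fin (v + 1) → F) |
        finrank F Q = 1 ∧ Q ≠ P0 ∧ ∃ P ∈ S, Q ≤ P ⊔ P0} ∩ {Q | Q ≤ H}).ncard) ∧
    sSup {Q : Submodule F (Fin (v + 1) → F) |
        finrank F Q = 1 ∧ Q ≠ P0 ∧ ∃ P ∈ S, Q ≤ P ⊔ P0} = (⊤ : Submodule F (Fin (v + 1) → F)) ∧
    ¬ IsCylinderIn q (r + 1) (v + 1) ⊤
        {Q : Submodule F (Fin (v + 1) → F) |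
          finrank F Q = 1 ∧ Q ≠ P0 ∧ ∃ P ∈ S, Q ≤ P ⊔ P0} := by
  have hV0' : finrank F V0 + 1 = finrank F (Fin (v + 1) → F) := by
    rw [hV0, Module.finrank_fin_fun]
  have hSne : S.Nonempty := Set.nonempty_of_ncard_ne_zero
    (by rw [hcard, ← hF]; exact pow_ne_zero _ Fintype.card_ne_zero)
  refine ⟨?_, fun H hH => ?_, sSup_cone_eq_top hP0 hP0V0 hpts hV0' hspan hSne,
    not_isCylinderIn_cone hF hP0 hP0V0 hpts (by omega) hcard hspan hnotcyl⟩
  · rw [← cone, ncard_cone hP0 hP0V0 hpts, hcard, hF, ← pow_succ]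
  · have := dvd_ncard_cone_inter hP0 hP0V0 hpts hV0' (m := q ^ r)
      (fun K hK hKV0 => hdiv K hK (by omega)) (by rw [hcard, hF, ← pow_succ])
      (H := H) (by rw [hH, Module.finrank_fin_fun])
    rwa [hF, ← pow_succ] at this
end

section
/- Let S be a spanning set of q^{r+1} points in PG(v-1,q) such that every hyperplane contains either 0 or exactly q^r points of S. Then v = r+2 and S is the complement of a hyperplane (an affine space AG(r+1,q)). -/
/-!
Hyperplanes are counted through the nonzero linear functionals `f`, each hyperplane `ker f`
being counted `q - 1` times. Double counting the incidences of points, and of pairs of distinct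
points, with these hyperplanes gives the first and second moments of `#(S ∩ ker f)`. As this
number is `0` or `q ^ r`, each moment determines the number `B` of functionals with
`S ∩ ker f ≠ ∅`; comparing the two values forces `dim V = r + 2` and
`B = q (q ^ (r + 1) - 1) < q ^ (r + 2) - 1`. Hence some hyperplane misses `S`; its complement
has exactly `q ^ (r + 1) = #S` points, so it is `S`.
-/

open Module
open scoped Classical

section

open Finset

lemma finrank_ker_of_ne_zero {K V : Type*} [Field K] [AddCommGroup V] [Module K V]
    [FiniteDimensional K V] {f : Dual K V} (hf : f ≠ 0) :
    finrank K (LinearMap.ker f) = finrank K V - 1 := by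
  rw [← f.finrank_ker_add_one_of_ne_zero hf, Nat.add_sub_cancel]

lemma finrank_sup_eq_two {K V : Type*} [DivisionRing K] [AddCommGroup V] [Module K V]
    {P Q : Submodule K V} (hP : finrank K P = 1) (hQ : finrank K Q = 1) (hPQ : P ≠ Q) :
    finrank K ↥(P ⊔ Q) = 2 := by
  have : FiniteDimensional K P := Module.finite_of_finrank_eq_succ hP
  have : FiniteDimensional K Q := Module.finite_of_finrank_eq_succ hQ
  have hinf : finrank K ↥(P ⊓ Q) = 0 := by
    by_contra h
    have hle : finrank K P ≤ finrank K ↥(P ⊓ Q) := by omega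
    have hle' : finrank K Q ≤ finrank K ↥(P ⊓ Q) := by omega
    exact hPQ ((Submodule.eq_of_le_of_finrank_le inf_le_left hle).symm.trans
      (Submodule.eq_of_le_of_finrank_le inf_le_right hle'))
  have := Submodule.finrank_sup_add_finrank_inf_eq P Q
  omega

lemma two_le_finrank_of_one_lt_card {K V : Type*} [DivisionRing K] [AddCommGroup V]
    [Module K V] [FiniteDimensional K V] {S : Finset (Submodule K V)}
    (hS : ∀ P ∈ S, finrank K P = 1) (h : 1 < #S) : 2 ≤ finrank K V := by
  obtain ⟨P, hP, Q, hQ, hPQ⟩ := one_lt_card.mp h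
  rw [← finrank_sup_eq_two (hS P hP) (hS Q hQ) hPQ]
  exact Submodule.finrank_le _

lemma sum_eq_card_filter_ne_zero_mul {ι : Type*} (D : Finset ι) (c : ι → ℕ) {m : ℕ}
    (hc : ∀ i ∈ D, c i = 0 ∨ c i = m) (g : ℕ → ℕ) (hg : g 0 = 0) :
    ∑ i ∈ D, g (c i) = #{i ∈ D | c i ≠ 0} * g m := by
  rw [← sum_filter_of_ne (p := fun i => c i ≠ 0) fun i _ hgi hci => hgi (by rw [hci, hg]),
    ← smul_eq_mul, ← sum_const]
  refine sum_congr rfl fun i hi => ?_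
  rw [mem_filter] at hi
  rw [(hc i hi.1).resolve_left hi.2]

lemma eq_of_two_intersection_counts {q r w B : ℕ} (hq : 2 ≤ q)
    (h₁ : B * q ^ r = q ^ (r + 1) * (q ^ (w + 1) - 1))
    (h₂ : B * (q ^ r * q ^ r - q ^ r) = (q ^ (r + 1) * q ^ (r + 1) - q ^ (r + 1)) * (q ^ w - 1)) :
    w = r ∧ B = q * (q ^ (w + 1) - 1) := by
  have hr : 0 < q ^ r := by positivity
  have hB : B = q * (q ^ (w + 1) - 1) :=
    Nat.eq_of_mul_eq_mul_right hr (by rw [h₁, pow_succ]; ring)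
  refine ⟨?_, hB⟩
  subst hB
  have one_le (k : ℕ) : 1 ≤ q ^ k := Nat.one_le_pow _ _ (by omega)
  have le_sq (k : ℕ) : q ^ k ≤ q ^ k * q ^ k := Nat.le_mul_of_pos_left _ (by positivity)
  zify [one_le, le_sq] at h₂
  have hqr : (q : ℤ) * q ^ r ≠ 0 := by positivity
  have hcancel : (q : ℤ) * q ^ r * ((q ^ (w + 1) - 1) * (q ^ r - 1))
      = q * q ^ r * ((q ^ (r + 1) - 1) * (q ^ w - 1)) := by
    linear_combination h₂
  have key : ((q : ℤ) - 1) * (q ^ w - q ^ r) = 0 := by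
    linear_combination -mul_left_cancel₀ hqr hcancel
  have hq1 : (q : ℤ) - 1 ≠ 0 := by omega
  have hpow : (q : ℤ) ^ w = q ^ r := sub_eq_zero.mp ((mul_eq_zero.mp key).resolve_left hq1)
  exact Nat.pow_right_injective hq (by exact_mod_cast hpow)

section

variable {F V : Type*} [Field F] [Fintype F] [AddCommGroup V] [Module F V] [Fintype V]

noncomputable local instance : Fintype (Dual F V) :=
  @Fintype.ofFinite _ (Module.finite_of_finite F)

lemma card_dual_le_ker (W : Submodule F V) :
    #{f : Dual F V | W ≤ LinearMap.ker f} = Fintype.card F ^ (finrank F V - finrank F W) := by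
  have hW := Subspace.finrank_add_finrank_dualAnnihilator_eq W
  rw [← hW, Nat.add_sub_cancel_left, ← Fintype.card_subtype, ← card_eq_pow_finrank (K := F) (V := W.dualAnnihilator)]
  refine Fintype.card_congr (Equiv.subtypeEquivRight fun f => ?_)
  rw [Submodule.mem_dualAnnihilator]
  rfl

lemma card_ne_zero_dual_le_ker (W : Submodule F V) :
    #{f : Dual F V | f ≠ 0 ∧ W ≤ LinearMap.ker f}
      = Fintype.card F ^ (finrank F V - finrank F W) - 1 := by
  have : ({f : Dual F V | f ≠ 0 ∧ W ≤ LinearMap.ker f} : Finset _)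
      = ({f : Dual F V | W ≤ LinearMap.ker f} : Finset _).erase 0 := by
    ext f; simp
  rw [this, card_erase_of_mem (by simp), card_dual_le_ker]

lemma sum_card_filter_le_ker_s11 {α : Type*} (T : Finset α) (φ : α → Submodule F V) {k : ℕ}
    (hφ : ∀ a ∈ T, finrank F (φ a) = k) :
    ∑ f : Dual F V with f ≠ 0, #{a ∈ T | φ a ≤ LinearMap.ker f}
      = #T * (Fintype.card F ^ (finrank F V - k) - 1) := by
  simp_rw [card_filter]
  rw [sum_comm, card_eq_sum_ones, sum_mul, one_mul]
  refine sum_congr rfl fun a ha => ?_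
  rw [← card_filter, filter_filter, card_ne_zero_dual_le_ker, hφ a ha]

lemma sum_card_offDiag_filter_le_ker {S : Finset (Submodule F V)}
    (hS : ∀ P ∈ S, finrank F P = 1) :
    ∑ f : Dual F V with f ≠ 0, #{P ∈ S | P ≤ LinearMap.ker f}.offDiag
      = #S.offDiag * (Fintype.card F ^ (finrank F V - 2) - 1) := by
  rw [← sum_card_filter_le_ker_s11 S.offDiag (fun z => z.1 ⊔ z.2) fun z hz => ?_]
  · refine sum_congr rfl fun f _ => congrArg card ?_
    ext z
    simp only [mem_offDiag, mem_filter, sup_le_iff]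
    tauto
  · obtain ⟨hz₁, hz₂, hne⟩ := mem_offDiag.mp hz
    exact finrank_sup_eq_two (hS _ hz₁) (hS _ hz₂) hne

lemma card_ne_zero_dual : #{f : Dual F V | f ≠ 0} = Fintype.card F ^ finrank F V - 1 := by
  rw [filter_ne', card_erase_of_mem (mem_univ _), card_univ, card_eq_pow_finrank (K := F),
    Subspace.dual_finrank_eq]

lemma card_apply_eq_one {f : Dual F V} (hf : f ≠ 0) :
    #{x : V | f x = 1} = Fintype.card F ^ (finrank F V - 1) := by
  obtain ⟨x₀, hx₀⟩ := LinearMap.surjective hf 1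
  rw [← finrank_ker_of_ne_zero hf, ← card_eq_pow_finrank (K := F), ← Fintype.card_coe]
  refine Fintype.card_congr
    { toFun := fun x => ⟨x - x₀, ?_⟩
      invFun := fun y => ⟨y + x₀, ?_⟩
      left_inv := fun x => ?_
      right_inv := fun y => ?_ }
  · have := (mem_filter.mp x.2).2
    simp [this, hx₀]
  · simp [hx₀, LinearMap.mem_ker.mp y.2]
  · simp
  · simp

lemma card_points_not_le_ker {f : Dual F V} (hf : f ≠ 0) :
    #{P : Submodule F V | finrank F P = 1 ∧ ¬ P ≤ LinearMap.ker f}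
      = Fintype.card F ^ (finrank F V - 1) := by
  rw [← card_apply_eq_one hf]
  symm
  refine card_nbij (fun x => F ∙ x) (fun x hx => ?_) (fun x hx y hy hxy => ?_) fun P hP => ?_
  · have hx1 : f x = 1 := (mem_filter.mp hx).2
    have hx0 : x ≠ 0 := by rintro rfl; simp at hx1
    simp only [coe_filter, mem_univ, true_and, Set.mem_ofPred_eq]
    refine ⟨finrank_span_singleton hx0, fun hle => ?_⟩
    simpa [hx1] using hle (Submodule.mem_span_singleton_self x)
  · obtain ⟨a, rfl⟩ := Submodule.span_singleton_eq_span_singleton.mp hxy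
    have hx1 : f x = 1 := (mem_filter.mp hx).2
    have hy1 : f (a • x) = 1 := (mem_filter.mp hy).2
    rw [Units.smul_def, map_smul, hx1, smul_eq_mul, mul_one] at hy1
    rw [Units.smul_def, hy1, one_smul]
  · simp only [coe_filter, mem_univ, true_and, Set.mem_ofPred_eq] at hP
    obtain ⟨p, hpP, hp⟩ := SetLike.not_le_iff_exists.mp hP.2
    rw [LinearMap.mem_ker] at hp
    have hx1 : f ((f p)⁻¹ • p) = 1 := by simp [hp]
    have hx0 : (f p)⁻¹ • p ≠ 0 := fun h => by simp [h] at hx1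
    refine ⟨(f p)⁻¹ • p, mem_filter.mpr ⟨mem_univ _, hx1⟩, Submodule.eq_of_le_of_finrank_eq ?_ ?_⟩
    · exact (Submodule.span_singleton_le_iff_mem _ _).mpr (P.smul_mem _ hpP)
    · rw [finrank_span_singleton hx0, hP.1]

lemma mem_iff_not_le_ker_of_card_eq {f : Dual F V} (hf : f ≠ 0) {S : Finset (Submodule F V)}
    (hS : ∀ P ∈ S, finrank F P = 1 ∧ ¬ P ≤ LinearMap.ker f)
    (hcard : #S = Fintype.card F ^ (finrank F V - 1)) {P : Submodule F V}
    (hP : finrank F P = 1) : P ∈ S ↔ ¬ P ≤ LinearMap.ker f := by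
  have hsub : S ⊆ ({P | finrank F P = 1 ∧ ¬ P ≤ LinearMap.ker f} : Finset (Submodule F V)) :=
    fun P hPS => mem_filter.mpr ⟨mem_univ _, hS P hPS⟩
  rw [eq_of_subset_of_card_le hsub (by rw [card_points_not_le_ker hf, hcard])]
  simp [hP]

theorem finrank_eq_and_exists_ker_disjoint {S : Finset (Submodule F V)} {r : ℕ}
    (hS : ∀ P ∈ S, finrank F P = 1) (hcard : #S = Fintype.card F ^ (r + 1))
    (hhyp : ∀ f : Dual F V, f ≠ 0 → #{P ∈ S | P ≤ LinearMap.ker f} = 0 ∨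
      #{P ∈ S | P ≤ LinearMap.ker f} = Fintype.card F ^ r) :
    finrank F V = r + 2 ∧ ∃ f : Dual F V, f ≠ 0 ∧ ∀ P ∈ S, ¬ P ≤ LinearMap.ker f := by
  have hq : 2 ≤ Fintype.card F := Fintype.one_lt_card
  obtain ⟨w, hw⟩ : ∃ w, finrank F V = w + 2 := Nat.exists_eq_add_of_le'
    (two_le_finrank_of_one_lt_card hS (hcard ▸ Nat.one_lt_pow (by omega) hq))
  have hc : ∀ f ∈ ({f | f ≠ 0} : Finset (Dual F V)), _ := fun f hf => hhyp f (mem_filter.mp hf).2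
  have h₁ := (sum_eq_card_filter_ne_zero_mul _ _ hc id rfl).symm.trans
    (sum_card_filter_le_ker_s11 S id hS)
  have h₂ := (sum_eq_card_filter_ne_zero_mul _ _ hc (fun n => n * n - n) rfl).symm.trans
    ((sum_congr rfl fun f _ => (offDiag_card _).symm).trans (sum_card_offDiag_filter_le_ker hS))
  rw [show finrank F V - 1 = w + 1 by omega, hcard] at h₁
  rw [show finrank F V - 2 = w by omega, offDiag_card, hcard] at h₂
  obtain ⟨rfl, hB⟩ := eq_of_two_intersection_counts hq h₁ h₂
  refine ⟨hw, ?_⟩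
  obtain ⟨f, hf, hfS⟩ := exists_mem_notMem_of_card_lt_card
    (s := {f ∈ ({f | f ≠ 0} : Finset (Dual F V)) | #{P ∈ S | P ≤ LinearMap.ker f} ≠ 0})
    (t := {f | f ≠ 0}) (by
    rw [hB, card_ne_zero_dual, hw, Nat.mul_sub_one]
    have : Fintype.card F * Fintype.card F ^ (w + 1) = Fintype.card F ^ (w + 2) := by ring
    have := Nat.le_self_pow (n := w + 2) (by omega) (Fintype.card F)
    omega)
  simp only [mem_filter, mem_univ, true_and, not_and, not_not] at hf hfS
  refine ⟨f, hf, fun P hP hPf => ?_⟩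
  have hPS : P ∈ ({P ∈ S | P ≤ LinearMap.ker f} : Finset _) := mem_filter.mpr ⟨hP, hPf⟩
  rw [card_eq_zero.mp (hfS hf)] at hPS
  exact notMem_empty P hPS

end

end

theorem stmt11_general (q v r : ℕ) (F : Type) [Field F] [Fintype F] (hF : Fintype.card F = q)
    (S : Finset (Submodule F (Fin v → F))) (hpts : ∀ P ∈ S, finrank F P = 1)
    (hcard : S.card = q ^ (r + 1))
    (hhyp : ∀ H : Submodule F (Fin v → F), finrank F H = v - 1 →
      (S.filter fun P => P ≤ H).card = 0 ∨ (S.filter fun P => P ≤ H).card = q ^ r) :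
    v = r + 2 ∧ ∃ H : Submodule F (Fin v → F), finrank F H = v - 1 ∧
      ∀ P : Submodule F (Fin v → F), finrank F P = 1 → (P ∈ S ↔ ¬ P ≤ H) := by
  subst hF
  have hker {f : Dual F (Fin v → F)} (hf : f ≠ 0) : finrank F (LinearMap.ker f) = v - 1 := by
    rw [finrank_ker_of_ne_zero hf, finrank_fin_fun]
  obtain ⟨hv, f, hf, hSf⟩ :=
    finrank_eq_and_exists_ker_disjoint hpts hcard fun f hf => hhyp _ (hker hf)
  rw [finrank_fin_fun] at hv
  refine ⟨hv, LinearMap.ker f, hker hf, fun P hP => ?_⟩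
  exact mem_iff_not_le_ker_of_card_eq hf (fun P hPS => ⟨hpts P hPS, hSf P hPS⟩)
    (by rw [hcard, finrank_fin_fun, hv]; rfl) hP

/-- a spanning set of `q^(r+1)` points in `PG(v-1,q)` such that
every hyperplane contains either `0` or exactly `q^r` of its points satisfies
`v = r+2` and is the complement of a hyperplane (an affine space `AG(r+1,q)`). -/
theorem stmt11 (q v r : ℕ) (F : Type) [Field F] [Fintype F] (hF : Fintype.card F = q)
    (S : Finset (Submodule F (Fin v → F))) (hpts : ∀ P ∈ S, finrank F P = 1)
    (hcard : S.card = q ^ (r + 1))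
    (hhyp : ∀ H : Submodule F (Fin v → F), finrank F H = v - 1 →
      (S.filter fun P => P ≤ H).card = 0 ∨ (S.filter fun P => P ≤ H).card = q ^ r)
    (hspan : (⨆ P ∈ S, P) = (⊤ : Submodule F (Fin v → F))) :
    v = r + 2 ∧ ∃ H : Submodule F (Fin v → F), finrank F H = v - 1 ∧
      ∀ P : Submodule F (Fin v → F), finrank F P = 1 → (P ∈ S ↔ ¬ P ≤ H) :=
  stmt11_general q v r F hF S hpts hcard hhyp
end

section
/- There is no set K of q(q−2) points in PG(2,q), q ≥ 4, such that every line meets K in 0, q−2, or q−1 points. -/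
open Module
open scoped Classical

section Aux

variable {F : Type} [Field F] [Fintype F]

local notation "V" => (Fin 3 → F)

noncomputable instance auxFin : Fintype (Submodule F V) :=
  @Fintype.ofFinite _ (Finite.of_injective _ SetLike.coe_injective)

lemma aux_card_sub (W : Submodule F V) :
    (Finset.univ.filter (fun v : V => v ∈ W)).card = Fintype.card F ^ finrank F W := by
  rw [← Fintype.card_subtype, card_eq_pow_finrank (K := F)]

lemma aux_sup2 (P : Submodule F V) (hP : finrank F P = 1) (v : V) (hv : v ∉ P) :
    finrank F (P ⊔ Submodule.span F {v} : Submodule F V) = 2 := by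
  have hv0 : v ≠ 0 := fun h => hv (h ▸ P.zero_mem)
  have h1 : finrank F (Submodule.span F {v} : Submodule F V) = 1 := finrank_span_singleton hv0
  have hlt : P < P ⊔ Submodule.span F {v} := by
    refine lt_of_le_of_ne le_sup_left (fun h => hv ?_)
    rw [h]
    exact Submodule.mem_sup_right (Submodule.mem_span_singleton_self v)
  have h2 : finrank F P < finrank F (P ⊔ Submodule.span F {v} : Submodule F V) :=
    Submodule.finrank_lt_finrank_of_lt hlt
  have h3 := Submodule.finrank_sup_add_finrank_inf_eq P (Submodule.span F {v})
  have h4 : finrank F (P ⊓ Submodule.span F {v} : Submodule F V)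
      ≤ finrank F (Submodule.span F {v} : Submodule F V) :=
    Submodule.finrank_mono inf_le_right
  omega

lemma aux_sup_pts (P Q : Submodule F V) (hP : finrank F P = 1) (hQ : finrank F Q = 1)
    (hne : P ≠ Q) : finrank F (P ⊔ Q : Submodule F V) = 2 := by
  have hinf : P ⊓ Q = ⊥ := by
    by_contra h
    have h1 : 0 < finrank F (P ⊓ Q : Submodule F V) :=
      Nat.pos_of_ne_zero (fun h0 => h (Submodule.finrank_eq_zero.mp h0))
    have hle1 : finrank F (P ⊓ Q : Submodule F V) ≤ finrank F P :=
      Submodule.finrank_mono inf_le_left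
    have heqP : P ⊓ Q = P := Submodule.eq_of_le_of_finrank_le inf_le_left (by omega)
    have heqQ : P ⊓ Q = Q := Submodule.eq_of_le_of_finrank_le inf_le_right (by omega)
    exact hne (heqP ▸ heqQ)
  have h3 := Submodule.finrank_sup_add_finrank_inf_eq P Q
  rw [hinf, finrank_bot] at h3
  omega

lemma aux_uniq (P Q L : Submodule F V) (hP : finrank F P = 1) (hQ : finrank F Q = 1)
    (hne : P ≠ Q) (hL : finrank F L = 2) (hPL : P ≤ L) (hQL : Q ≤ L) : L = P ⊔ Q :=
  (Submodule.eq_of_le_of_finrank_le (sup_le hPL hQL)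
    (by rw [aux_sup_pts P Q hP hQ hne]; omega)).symm

lemma aux_pencil (hq : 4 ≤ Fintype.card F) (P : Submodule F V) (hP : finrank F P = 1) :
    ((Finset.univ.filter (fun L : Submodule F V => finrank F L = 2)).filter
      (fun L => P ≤ L)).card = Fintype.card F + 1 := by
  classical
  set q := Fintype.card F with hqdef
  set T := ((Finset.univ.filter (fun L : Submodule F V => finrank F L = 2)).filter
      (fun L => P ≤ L)) with hT
  set s : Finset V := Finset.univ.filter (fun v => v ∉ P) with hs
  have hmap : ∀ v ∈ s, (P ⊔ Submodule.span F {v} : Submodule F V) ∈ T := by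
    intro v hv
    simp only [hs, Finset.mem_filter, Finset.mem_univ, true_and] at hv
    simp only [hT, Finset.mem_filter, Finset.mem_univ, true_and]
    exact ⟨aux_sup2 P hP v hv, le_sup_left⟩
  have h1 : s.card = ∑ L ∈ T, (s.filter (fun v => P ⊔ Submodule.span F {v} = L)).card :=
    Finset.card_eq_sum_card_fiberwise hmap
  have hfib : ∀ L ∈ T, (s.filter (fun v => P ⊔ Submodule.span F {v} = L)).card = q ^ 2 - q := by
    intro L hL
    simp only [hT, Finset.mem_filter, Finset.mem_univ, true_and] at hL
    obtain ⟨hL2, hPL⟩ := hL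
    have heq : s.filter (fun v => P ⊔ Submodule.span F {v} = L)
        = (Finset.univ.filter (fun v : V => v ∈ L)) \ (Finset.univ.filter (fun v : V => v ∈ P)) := by
      ext v
      simp only [hs, Finset.mem_filter, Finset.mem_sdiff, Finset.mem_univ, true_and,
        Finset.filter_filter]
      constructor
      · rintro ⟨hvP, rfl⟩
        exact ⟨Submodule.mem_sup_right (Submodule.mem_span_singleton_self v), hvP⟩
      · rintro ⟨hvL, hvP⟩
        refine ⟨hvP, ?_⟩
        have hsle : (P ⊔ Submodule.span F {v} : Submodule F V) ≤ L :=
          sup_le hPL ((Submodule.span_singleton_le_iff_mem v L).mpr hvL)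
        exact Submodule.eq_of_le_of_finrank_le hsle (by rw [aux_sup2 P hP v hvP]; omega)
    have hsub : (Finset.univ.filter (fun v : V => v ∈ P))
        ⊆ (Finset.univ.filter (fun v : V => v ∈ L)) := by
      intro v hv
      simp only [Finset.mem_filter, Finset.mem_univ, true_and] at hv ⊢
      exact hPL hv
    rw [heq, Finset.card_sdiff_of_subset hsub, aux_card_sub, aux_card_sub, hP, hL2, pow_one, ← hqdef]
  have hscard : s.card = q ^ 3 - q := by
    have : s = Finset.univ \ (Finset.univ.filter (fun v : V => v ∈ P)) := by
      ext v; simp [hs]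
    rw [this, Finset.card_sdiff_of_subset (Finset.filter_subset _ _), aux_card_sub, hP,
      Finset.card_univ, Fintype.card_fun, Fintype.card_fin, pow_one, ← hqdef]
  rw [Finset.sum_congr rfl hfib, Finset.sum_const, smul_eq_mul, hscard] at h1
  have hkey : (q ^ 3 - q) = (q + 1) * (q ^ 2 - q) := by
    have h2 : q ≤ q ^ 2 := by nlinarith
    have h3 : q ≤ q ^ 3 := by nlinarith
    nlinarith [Nat.sub_add_cancel h2, Nat.sub_add_cancel h3]
  have hpos : 0 < q ^ 2 - q := by
    have hq2 : q + 1 ≤ q ^ 2 := by nlinarith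
    omega
  have := h1.symm
  rw [hkey] at this
  exact Nat.eq_of_mul_eq_mul_right hpos this

end Aux

/-- there is no set `K` of `q(q-2)` points in `PG(2,q)`, `q ≥ 4`,
such that every line meets `K` in `0`, `q-2`, or `q-1` points. -/
theorem stmt13 (q : ℕ) (hq : 4 ≤ q)
    (F : Type) [Field F] [Fintype F] (hF : Fintype.card F = q)
    (K : Finset (Submodule F (Fin 3 → F))) (hpts : ∀ P ∈ K, finrank F P = 1)
    (hcard : K.card = q * (q - 2))
    (hlines : ∀ L : Submodule F (Fin 3 → F), finrank F L = 2 →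
      (K.filter fun P => P ≤ L).card = 0 ∨ (K.filter fun P => P ≤ L).card = q - 2 ∨
        (K.filter fun P => P ≤ L).card = q - 1) :
    False := by
  classical
  subst hF
  set q := Fintype.card F with hqdef
  set Lines : Finset (Submodule F (Fin 3 → F)) :=
    Finset.univ.filter (fun L => finrank F L = 2) with hLines
  set kf : Submodule F (Fin 3 → F) → ℕ := fun L => (K.filter fun P => P ≤ L).card with hkf
  -- Equation A : sum of kf over Lines = |K| * (q+1)
  have EA : ∑ L ∈ Lines, kf L = K.card * (q + 1) := by
    have h1 : ∀ L ∈ Lines, kf L = ∑ P ∈ K, if P ≤ L then 1 else 0 := by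
      intro L _; exact Finset.card_filter _ _
    rw [Finset.sum_congr rfl h1, Finset.sum_comm]
    have h2 : ∀ P ∈ K, (∑ L ∈ Lines, if P ≤ L then 1 else 0) = q + 1 := by
      intro P hP
      rw [← Finset.card_filter]
      exact aux_pencil hq P (hpts P hP)
    rw [Finset.sum_congr rfl h2, Finset.sum_const, smul_eq_mul]
  -- Equation B : sum of kf*(kf-1) over Lines = |K|² - |K|
  have EB : ∑ L ∈ Lines, (kf L * kf L - kf L) = K.card * K.card - K.card := by
    have h0 : ∀ L ∈ Lines, kf L * kf L - kf L = ((K.filter fun P => P ≤ L).offDiag).card := by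
      intro L _; rw [Finset.offDiag_card]
    have h1 : ∀ L ∈ Lines, ((K.filter fun P => P ≤ L).offDiag).card
        = ∑ p ∈ K.offDiag, if p.1 ≤ L ∧ p.2 ≤ L then 1 else 0 := by
      intro L _
      rw [← Finset.card_filter]
      congr 1
      ext p
      simp only [Finset.mem_offDiag, Finset.mem_filter]
      tauto
    rw [Finset.sum_congr rfl h0, Finset.sum_congr rfl h1, Finset.sum_comm]
    have h2 : ∀ p ∈ K.offDiag, (∑ L ∈ Lines, if p.1 ≤ L ∧ p.2 ≤ L then 1 else 0) = 1 := by
      rintro ⟨P, Q⟩ hp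
      simp only [Finset.mem_offDiag] at hp
      obtain ⟨hPK, hQK, hne⟩ := hp
      rw [← Finset.card_filter]
      rw [Finset.card_eq_one]
      refine ⟨P ⊔ Q, ?_⟩
      ext L
      simp only [Finset.mem_filter, hLines, Finset.mem_univ, true_and, Finset.mem_singleton]
      constructor
      · rintro ⟨hL2, hPL, hQL⟩
        exact aux_uniq P Q L (hpts P hPK) (hpts Q hQK) hne hL2 hPL hQL
      · rintro rfl
        exact ⟨aux_sup_pts P Q (hpts P hPK) (hpts Q hQK) hne, le_sup_left, le_sup_right⟩
    rw [Finset.sum_congr rfl h2, Finset.sum_const, smul_eq_mul, mul_one, Finset.offDiag_card]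
  -- split the sums according to the three possible values of kf
  have hsplit : ∀ g : ℕ → ℕ, g 0 = 0 → ∑ L ∈ Lines, g (kf L)
      = (Lines.filter (fun L => kf L = q - 2)).card * g (q - 2)
        + (Lines.filter (fun L => kf L = q - 1)).card * g (q - 1) := by
    intro g hg0
    rw [← Finset.sum_filter_add_sum_filter_not Lines (fun L => kf L = q - 2)]
    congr 1
    · rw [Finset.sum_congr rfl (fun L hL => by
        rw [(Finset.mem_filter.mp hL).2]), Finset.sum_const, smul_eq_mul]
    · rw [← Finset.sum_filter_add_sum_filter_not
        (Lines.filter (fun L => ¬ kf L = q - 2)) (fun L => kf L = q - 1)]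
      have e1 : (Lines.filter (fun L => ¬ kf L = q - 2)).filter (fun L => kf L = q - 1)
          = Lines.filter (fun L => kf L = q - 1) := by
        rw [Finset.filter_filter]
        apply Finset.filter_congr
        intro L _
        constructor
        · exact fun h => h.2
        · intro h
          exact ⟨by rw [h]; omega, h⟩
      have e2 : ∑ L ∈ (Lines.filter (fun L => ¬ kf L = q - 2)).filter
          (fun L => ¬ kf L = q - 1), g (kf L) = 0 := by
        apply Finset.sum_eq_zero
        intro L hL
        simp only [Finset.filter_filter, Finset.mem_filter, hLines, Finset.mem_univ,
          true_and] at hL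
        have hL2 : finrank F L = 2 := by tauto
        have hn2 : ¬ kf L = q - 2 := by tauto
        have hn1 : ¬ kf L = q - 1 := by tauto
        have := hlines L hL2
        have hz : kf L = 0 := by
          rcases this with h | h | h
          · exact h
          · exact absurd h hn2
          · exact absurd h hn1
        rw [hz, hg0]
      rw [e1, e2, add_zero, Finset.sum_congr rfl (fun L hL => by
        rw [(Finset.mem_filter.mp hL).2]), Finset.sum_const, smul_eq_mul]
  set b := (Lines.filter (fun L => kf L = q - 2)).card with hb
  set c := (Lines.filter (fun L => kf L = q - 1)).card with hc
  have SAs : b * (q - 2) + c * (q - 1) = q * (q - 2) * (q + 1) := by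
    have := hsplit id rfl
    simp only [id] at this
    rw [← this, EA, hcard]
  have SBs : b * ((q - 2) * (q - 2) - (q - 2)) + c * ((q - 1) * (q - 1) - (q - 1))
      = q * (q - 2) * (q * (q - 2)) - q * (q - 2) := by
    have := hsplit (fun k => k * k - k) (by simp)
    rw [← this, EB, hcard]
  -- pass to the integers and derive the contradiction
  have h2q : (2 : ℕ) ≤ q := by omega
  have h1q : (1 : ℕ) ≤ q := by omega
  have h3 : q - 2 ≤ (q - 2) * (q - 2) := Nat.le_mul_of_pos_left _ (by omega)
  have h4 : q - 1 ≤ (q - 1) * (q - 1) := Nat.le_mul_of_pos_left _ (by omega)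
  have h5 : q * (q - 2) ≤ q * (q - 2) * (q * (q - 2)) :=
    Nat.le_mul_of_pos_right _ (Nat.mul_pos (by omega) (by omega))
  zify [h2q, h1q, h3, h4, h5] at SAs SBs
  set Q : ℤ := (q : ℤ) with hQ
  have hQ4 : (4 : ℤ) ≤ Q := by rw [hQ]; exact_mod_cast hq
  have hCkey : (Q - 1) * (c : ℤ) = 2 * Q * (Q - 2) := by linear_combination SBs - (Q - 3) * SAs
  have hdvd : (Q - 1) ∣ 2 := ⟨2 * (Q - 1) - (c : ℤ), by linear_combination hCkey⟩
  have hle : Q - 1 ≤ 2 := Int.le_of_dvd (by norm_num) hdvd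
  linarith
end

section
/- There is no set K of q(q−3) points in PG(2,q), q ≥ 7, such that every line meets K in 0, q−3, or q−2 points. -/
/-!
Work in an arbitrary finite projective plane of order `q` and write `n l` for the number of
points of `K` on the line `l`. Counting incidences gives `∑ 1`, `∑ n` and `∑ n²` over all lines,
hence `∑ (n - a) (n - b)` for any `a`, `b`. For `a = 0`, `b = q - 3` this sum is `3 |K| > 0`, so
some line `l₀` meets `K` in `q - 2` points; for `a = q - 3`, `b = q - 2` only the `a₀` lines
missing `K` contribute, which gives `(q - 2) a₀ = 4q - 2`. Each of the three points of `l₀` off `K`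
lies on at least two lines missing `K`, since its `q + 1` lines carry only `|K| = q (q - 3)`
points; these lines are distinct for distinct points, so `a₀ ≥ 6`, forcing `q ≤ 5`.

`PG(2, q)` is Mathlib's projective plane on `ℙ F (Fin 3 → F)`, in which the line `w` is the plane
orthogonal to `w`.
-/

open Module
open scoped Classical LinearAlgebra.Projectivization

open Finset

lemma sum_sub_mul_sub_eq_mul_card_filter_eq_zero {ι : Type*} [Fintype ι] {f : ι → ℕ} {a b : ℕ}
    (h : ∀ i, f i = 0 ∨ f i = a ∨ f i = b) :
    ∑ i, ((f i : ℤ) - a) * (f i - b) = a * b * #{i | f i = 0} := by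
  rw [card_eq_sum_ones, Nat.cast_sum, mul_sum, sum_filter]
  refine sum_congr rfl fun i _ => ?_
  rcases h i with hi | hi | hi <;> by_cases hi0 : f i = 0 <;> simp_all

namespace Configuration

variable {P L : Type*} [Membership P L]

noncomputable def intersectionCount (K : Finset P) (l : L) : ℕ := #{p ∈ K | p ∈ l}

lemma sum_intersectionCount_eq_sum_card (K : Finset P) (T : Finset L) :
    ∑ l ∈ T, intersectionCount K l = ∑ p ∈ K, #{l ∈ T | p ∈ l} := by
  simp only [intersectionCount, card_filter]
  exact sum_comm

namespace Nondegenerate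

variable [Nondegenerate P L] [Fintype P]

lemma card_filter_mem_mem_le_one {l l' : L} (h : l ≠ l') :
    #{p : P | p ∈ l ∧ p ∈ l'} ≤ 1 :=
  card_le_one.2 fun _ hp _ hp' => by
    simp only [mem_filter, mem_univ, true_and] at hp hp'
    exact (eq_or_eq hp.1 hp'.1 hp.2 hp'.2).resolve_right h

lemma sum_card_filter_mem_le {l₀ : L} {S : Finset L} (h : l₀ ∉ S) :
    ∑ p : P with p ∈ l₀, #{l ∈ S | p ∈ l} ≤ #S := by
  rw [← sum_intersectionCount_eq_sum_card, card_eq_sum_ones]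
  refine sum_le_sum fun l hl => ?_
  rw [intersectionCount, filter_filter]
  exact card_filter_mem_mem_le_one fun e => h (e ▸ hl)

end Nondegenerate

namespace ProjectivePlane

variable [ProjectivePlane P L] [Fintype L]

lemma card_lines_through_two {p p' : P} (h : p ≠ p') : #{l : L | p ∈ l ∧ p' ∈ l} = 1 := by
  obtain ⟨l, hl, huniq⟩ := HasLines.existsUnique_line P L p p' h
  rw [card_eq_one]
  exact ⟨l, by ext; simpa using ⟨huniq _, fun e => e ▸ hl⟩⟩

variable [Fintype P]

lemma card_lines_through (p : P) : #{l : L | p ∈ l} = order P L + 1 := by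
  rw [← lineCount_eq L p, lineCount, Nat.card_eq_fintype_card, Fintype.card_subtype]

lemma card_points_on (l : L) : #{p : P | p ∈ l} = order P L + 1 := by
  rw [← pointCount_eq P l, pointCount, Nat.card_eq_fintype_card, Fintype.card_subtype]

variable (L) in
lemma sum_intersectionCount (K : Finset P) :
    ∑ l : L, intersectionCount K l = #K * (order P L + 1) := by
  rw [sum_intersectionCount_eq_sum_card, sum_congr rfl fun p _ => card_lines_through p,
    sum_const, smul_eq_mul]

variable (L) in
lemma sum_intersectionCount_lines_through (K : Finset P) (p : P) :
    ∑ l : L with p ∈ l, intersectionCount K l = #K + if p ∈ K then order P L else 0 := by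
  rw [sum_intersectionCount_eq_sum_card]
  have hterm : ∀ x ∈ K, #{l ∈ ({l : L | p ∈ l} : Finset L) | x ∈ l}
      = 1 + if x = p then order P L else 0 := by
    intro x _
    rw [filter_filter]
    by_cases hx : x = p
    · simp only [hx, and_self, card_lines_through, if_true, add_comm]
    · rw [card_lines_through_two (Ne.symm hx), if_neg hx]
  rw [sum_congr rfl hterm, sum_add_distrib, sum_ite_eq', card_eq_sum_ones]

variable (L) in
lemma sum_intersectionCount_sq (K : Finset P) :
    ∑ l : L, intersectionCount K l ^ 2 = #K * (#K + order P L) := by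
  calc ∑ l : L, intersectionCount K l ^ 2
      = ∑ l : L, ∑ p ∈ K, if p ∈ l then intersectionCount K l else 0 := by
        refine sum_congr rfl fun l _ => ?_
        rw [← sum_filter, sum_const, smul_eq_mul, sq, intersectionCount]
    _ = ∑ p ∈ K, ∑ l : L with p ∈ l, intersectionCount K l := by
        rw [sum_comm]
        simp only [sum_filter]
    _ = #K * (#K + order P L) := by
        rw [sum_congr rfl fun p hp => by rw [sum_intersectionCount_lines_through, if_pos hp],
          sum_const, smul_eq_mul]

variable (L) in
lemma sum_intersectionCount_sub_mul_sub (K : Finset P) (a b : ℤ) :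
    ∑ l : L, ((intersectionCount K l : ℤ) - a) * (intersectionCount K l - b)
      = #K * (#K + order P L) - (a + b) * (#K * (order P L + 1))
        + a * b * (order P L ^ 2 + order P L + 1) := by
  have hsq := congrArg (Nat.cast : ℕ → ℤ) (sum_intersectionCount_sq L K)
  have hsum := congrArg (Nat.cast : ℕ → ℤ) (sum_intersectionCount L K)
  have hcard : (Fintype.card L : ℤ) = order P L ^ 2 + order P L + 1 := by
    exact_mod_cast card_lines P L
  push_cast [sq] at hsq hsum
  simp only [sub_mul, mul_sub, sum_sub_distrib, sum_const, card_univ, ← sum_mul, ← mul_sum,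
    nsmul_eq_mul]
  rw [← hcard]
  linear_combination hsq - (a + b) * hsum

variable {K : Finset P}

lemma two_le_card_zero_lines_through (hq : 3 ≤ order P L)
    (hK : #K = order P L * (order P L - 3))
    (h : ∀ l : L, intersectionCount K l = 0 ∨ intersectionCount K l = order P L - 3 ∨
      intersectionCount K l = order P L - 2)
    {p : P} (hp : p ∉ K) {l₀ : L} (hpl₀ : p ∈ l₀)
    (hl₀ : intersectionCount K l₀ = order P L - 2) :
    2 ≤ #{l : L | intersectionCount K l = 0 ∧ p ∈ l} := by
  set q := order P L
  set z := #{l : L | intersectionCount K l = 0 ∧ p ∈ l}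
  have hsum : ∑ l : L with p ∈ l, ((intersectionCount K l : ℤ) - (q - 3)) = -(q - 3) := by
    have := congrArg (Nat.cast : ℕ → ℤ) (sum_intersectionCount_lines_through L K p)
    rw [if_neg hp, add_zero, hK] at this
    push_cast [Nat.cast_sub hq] at this
    rw [sum_sub_distrib, this, sum_const, card_lines_through, nsmul_eq_mul]
    push_cast; ring
  have hz : ∑ l : L with p ∈ l,
      ((if l = l₀ then 1 else 0) - (q - 3) * (if intersectionCount K l = 0 then 1 else 0) : ℤ)
        = 1 - (q - 3) * z := by
    rw [sum_sub_distrib, ← mul_sum, sum_ite_eq', if_pos (by simpa using hpl₀), sum_boole,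
      filter_filter]
    simp only [z, and_comm]
  have hbound : 1 - (q - 3) * (z : ℤ) ≤ -(q - 3) := by
    rw [← hz, ← hsum]
    -- a line through `p` contributes `-(q - 3)` if it misses `K` and `≥ 0` otherwise, `l₀` even `1`
    refine sum_le_sum fun l _ => ?_
    rcases h l with h0 | h0 | h0 <;> split_ifs <;> subst_vars <;> omega
  have : (3 : ℤ) ≤ q := by exact_mod_cast hq
  nlinarith

lemma six_le_card_zero_lines (hq : 3 ≤ order P L) (hK : #K = order P L * (order P L - 3))
    (h : ∀ l : L, intersectionCount K l = 0 ∨ intersectionCount K l = order P L - 3 ∨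
      intersectionCount K l = order P L - 2)
    {l₀ : L} (hl₀ : intersectionCount K l₀ = order P L - 2) :
    6 ≤ #{l : L | intersectionCount K l = 0} := by
  have hoff : #{p : P | p ∈ l₀ ∧ p ∉ K} = 3 := by
    have hsplit := card_filter_add_card_filter_not (s := ({p : P | p ∈ l₀} : Finset P)) (· ∈ K)
    rw [card_points_on, filter_filter, filter_filter] at hsplit
    have hon : #{p : P | p ∈ l₀ ∧ p ∈ K} = intersectionCount K l₀ := by
      rw [intersectionCount]; congr 1; ext; simp [and_comm]
    omega
  calc 6 = #{p : P | p ∈ l₀ ∧ p ∉ K} • 2 := by rw [hoff, smul_eq_mul]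
    _ ≤ ∑ p : P with p ∈ l₀ ∧ p ∉ K, #{l : L | intersectionCount K l = 0 ∧ p ∈ l} :=
        card_nsmul_le_sum _ _ _ fun p hp => by
          simp only [mem_filter, mem_univ, true_and] at hp
          exact two_le_card_zero_lines_through hq hK h hp.2 hp.1 hl₀
    _ ≤ ∑ p : P with p ∈ l₀, #{l : L | intersectionCount K l = 0 ∧ p ∈ l} :=
        sum_le_sum_of_subset (monotone_filter_right _ fun _ _ => And.left)
    _ ≤ #{l : L | intersectionCount K l = 0} := by
        simpa only [filter_filter] using
          Nondegenerate.sum_card_filter_mem_le (P := P) (l₀ := l₀)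
            (S := {l | intersectionCount K l = 0})
            (by simp only [mem_filter, mem_univ, true_and]; omega)

variable (L) in
theorem card_ne_of_forall_intersectionCount (hq : 6 ≤ order P L)
    (h : ∀ l : L, intersectionCount K l = 0 ∨ intersectionCount K l = order P L - 3 ∨
      intersectionCount K l = order P L - 2) :
    #K ≠ order P L * (order P L - 3) := by
  intro hK
  set q := order P L with hq_def
  have hcast : ((q - 3 : ℕ) : ℤ) = q - 3 := by push_cast [show 3 ≤ q by omega]; ring
  have hcast' : ((q - 2 : ℕ) : ℤ) = q - 2 := by push_cast [show 2 ≤ q by omega]; ring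
  have hq' : (6 : ℤ) ≤ q := by exact_mod_cast hq
  obtain ⟨l₀, hl₀⟩ : ∃ l₀ : L, intersectionCount K l₀ = q - 2 := by
    by_contra! hne
    have h' : ∀ l : L, intersectionCount K l = 0 ∨ intersectionCount K l = 0 ∨
        intersectionCount K l = q - 3 := fun l => by
      rcases h l with h0 | h0 | h0
      exacts [Or.inl h0, Or.inr (Or.inr h0), absurd h0 (hne l)]
    have hvar := sum_sub_mul_sub_eq_mul_card_filter_eq_zero h'
    rw [sum_intersectionCount_sub_mul_sub, hK, ← hq_def] at hvar
    push_cast [hcast] at hvar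
    nlinarith
  have hvar := sum_sub_mul_sub_eq_mul_card_filter_eq_zero h
  rw [sum_intersectionCount_sub_mul_sub, hK, ← hq_def] at hvar
  push_cast [hcast, hcast'] at hvar
  have h6 : (6 : ℤ) ≤ #{l : L | intersectionCount K l = 0} := by
    exact_mod_cast six_le_card_zero_lines (by omega) hK h hl₀
  nlinarith [mul_le_mul_of_nonneg_left h6 (by nlinarith : (0 : ℤ) ≤ (q - 3) * (q - 2))]

end ProjectivePlane
end Configuration

namespace Projectivization

variable {K V : Type*} [DivisionRing K] [AddCommGroup V] [Module K V] [Fintype (ℙ K V)]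

lemma card_filter_submodule_mem (S : Finset (Submodule K V)) (hS : ∀ W ∈ S, finrank K W = 1)
    (p : Submodule K V → Prop) :
    #{v : ℙ K V | v.submodule ∈ S ∧ p v.submodule} = #{W ∈ S | p W} := by
  refine card_bij (fun v _ => v.submodule) (fun v hv => by simpa using hv)
    (fun v _ w _ h => submodule_injective h) fun W hW => ?_
  rw [mem_filter] at hW
  exact ⟨mk'' W (hS W hW.1), by simpa [submodule_mk''] using hW, submodule_mk'' W _⟩

end Projectivization

namespace Configuration.ofField

open Projectivization

variable {F : Type*} [Field F]

noncomputable def lineSubmodule (w : ℙ F (Fin 3 → F)) : Submodule F (Fin 3 → F) :=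
  LinearMap.ker (dotProductEquiv F (Fin 3) w.rep)

lemma finrank_lineSubmodule (w : ℙ F (Fin 3 → F)) : finrank F (lineSubmodule w) = 2 := by
  have := Dual.finrank_ker_add_one_of_ne_zero
    (f := dotProductEquiv F (Fin 3) w.rep) (by simpa using w.rep_nonzero)
  rw [finrank_fin_fun] at this
  exact Nat.add_right_cancel this

lemma submodule_le_lineSubmodule_iff (v w : ℙ F (Fin 3 → F)) :
    v.submodule ≤ lineSubmodule w ↔ v ∈ w := by
  rw [submodule_eq, Submodule.span_singleton_le_iff_mem, lineSubmodule, LinearMap.mem_ker,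
    dotProductEquiv_apply_apply, mem_iff, dotProduct_comm,
    ← orthogonal_mk v.rep_nonzero w.rep_nonzero, mk_rep, mk_rep]

variable [Fintype F]

lemma order_eq_card :
    ProjectivePlane.order (ℙ F (Fin 3 → F)) (ℙ F (Fin 3 → F)) = Fintype.card F := by
  let _ : Fintype (ℙ F (Fin 3 → F)) := .ofFinite _
  have h := ProjectivePlane.card_points (ℙ F (Fin 3 → F)) (ℙ F (Fin 3 → F))
  rw [Fintype.card_eq_nat_card, card_of_finrank F (Fin 3 → F) (finrank_fin_fun F),
    Nat.card_eq_fintype_card] at h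
  simp only [sum_range_succ, sum_range_zero] at h
  nlinarith

end Configuration.ofField

open Configuration

/-- there is no set `K` of `q(q-3)` points in `PG(2,q)`, `q ≥ 7`,
such that every line meets `K` in `0`, `q-3`, or `q-2` points. -/
theorem stmt14 (q : ℕ) (hq : 7 ≤ q)
    (F : Type) [Field F] [Fintype F] (hF : Fintype.card F = q)
    (K : Finset (Submodule F (Fin 3 → F))) (hpts : ∀ P ∈ K, finrank F P = 1)
    (hcard : K.card = q * (q - 3))
    (hlines : ∀ L : Submodule F (Fin 3 → F), finrank F L = 2 →
      (K.filter fun P => P ≤ L).card = 0 ∨ (K.filter fun P => P ≤ L).card = q - 3 ∨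
        (K.filter fun P => P ≤ L).card = q - 2) :
    False := by
  let _ : Fintype (ℙ F (Fin 3 → F)) := .ofFinite _
  have hord : ProjectivePlane.order (ℙ F (Fin 3 → F)) (ℙ F (Fin 3 → F)) = q :=
    hF ▸ ofField.order_eq_card
  refine ProjectivePlane.card_ne_of_forall_intersectionCount (ℙ F (Fin 3 → F))
    (K := {v | v.submodule ∈ K}) (by omega) (fun w => ?_) ?_
  · have hw : intersectionCount ({v | v.submodule ∈ K} : Finset (ℙ F (Fin 3 → F))) w
        = (K.filter fun P => P ≤ ofField.lineSubmodule w).card := by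
      rw [intersectionCount, filter_filter, ← Projectivization.card_filter_submodule_mem K hpts]
      simp only [ofField.submodule_le_lineSubmodule_iff]
    rw [hw, hord]
    exact hlines _ (ofField.finrank_lineSubmodule w)
  · rw [hord, ← hcard]
    simpa using Projectivization.card_filter_submodule_mem K hpts fun _ => True
end

section
/- No set K of 14 points in PG(2,7) has line spectrum (a_0, a_2, a_3, a_4) = (11, 31, 10, 5) with all other a_i = 0. -/
open Module
open scoped Classical

instance : Fact (Nat.Prime 7) := ⟨by norm_num⟩

/-!
Call a line a trisecant if it meets `K` in three points; by the spectrum every other line meets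
`K` in an even number of points. Summing `|L ∩ K|` over the eight lines through a point shows that
an odd number `d_P` of trisecants passes through each `P ∈ K` (the sum is `13 + 8`) and an even
number through each point off `K` (the sum is `14`). So each of the five points of a trisecant
outside `K` lies on a second trisecant, which gives at least `10 · 5` ordered pairs of trisecants
meeting off `K`. The pairs meeting in `K` number `∑ d_P (d_P - 1) ≥ ∑ (3 d_P - 3) = 9 · 10 - 3 · 14`
since each `d_P` is odd and `∑ d_P = 3 · 10`. Together these exceed the `10 · 9` ordered pairs of
distinct trisecants.
-/

open Finset

namespace ProjectiveSpace

variable {F V : Type*} [Field F] [AddCommGroup V] [Module F V]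

instance [Finite V] : Finite (Submodule F V) :=
  Finite.of_injective _ (SetLike.coe_injective (A := Submodule F V))

noncomputable instance [Finite V] : Fintype (Submodule F V) := Fintype.ofFinite _

theorem finrank_sup_eq_two {P Q : Submodule F V} (hP : finrank F P = 1) (hQ : finrank F Q = 1)
    (hPQ : P ≠ Q) : finrank F ↥(P ⊔ Q) = 2 := by
  have : FiniteDimensional F P := Module.finite_of_finrank_eq_succ hP
  have : FiniteDimensional F Q := Module.finite_of_finrank_eq_succ hQ
  have hinf : P ⊓ Q = ⊥ := by
    by_contra h
    have h1 := Submodule.finrank_mono (inf_le_left : P ⊓ Q ≤ P)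
    have h2 := Submodule.finrank_mono (inf_le_right : P ⊓ Q ≤ Q)
    have h0 : finrank F ↥(P ⊓ Q) ≠ 0 := fun h0 => h (Submodule.finrank_eq_zero.mp h0)
    exact hPQ ((Submodule.eq_of_le_of_finrank_le inf_le_left (by omega)).symm.trans
      (Submodule.eq_of_le_of_finrank_le inf_le_right (by omega)))
  have := Submodule.finrank_sup_add_finrank_inf_eq P Q
  rw [hinf, finrank_bot, hP, hQ] at this
  omega

theorem eq_sup_of_le {P Q L : Submodule F V} (hP : finrank F P = 1) (hQ : finrank F Q = 1)
    (hPQ : P ≠ Q) (hL : finrank F L = 2) (hPL : P ≤ L) (hQL : Q ≤ L) : L = P ⊔ Q :=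
  have : FiniteDimensional F L := Module.finite_of_finrank_eq_succ hL
  (Submodule.eq_of_le_of_finrank_le (sup_le hPL hQL)
    (by rw [finrank_sup_eq_two hP hQ hPQ, hL])).symm

theorem line_eq_of_le {P Q L L' : Submodule F V} (hP : finrank F P = 1)
    (hQ : finrank F Q = 1) (hPQ : P ≠ Q) (hL : finrank F L = 2) (hL' : finrank F L' = 2)
    (hPL : P ≤ L) (hQL : Q ≤ L) (hPL' : P ≤ L') (hQL' : Q ≤ L') : L = L' :=
  (eq_sup_of_le hP hQ hPQ hL hPL hQL).trans (eq_sup_of_le hP hQ hPQ hL' hPL' hQL').symm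

theorem card_biUnion_offDiag {K T : Finset (Submodule F V)} (hT : ∀ L ∈ T, finrank F L = 2)
    (hK : ∀ P ∈ K, finrank F P = 1) :
    #(K.biUnion fun P => {L ∈ T | P ≤ L}.offDiag) = ∑ P ∈ K, #{L ∈ T | P ≤ L}.offDiag := by
  refine card_biUnion fun P hP Q hQ hPQ => disjoint_left.2 fun ⟨L₁, L₂⟩ h₁ h₂ => ?_
  simp only [mem_offDiag, mem_filter] at h₁ h₂
  exact h₁.2.2 (line_eq_of_le (hK P hP) (hK Q hQ) hPQ (hT L₁ h₁.1.1) (hT L₂ h₁.2.1.1)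
    h₁.1.2 h₂.1.2 h₁.2.1.2 h₂.2.1.2)

def LinesMeetEvenlyOrInThree (K : Finset (Submodule F V)) : Prop :=
  ∀ L : Submodule F V, finrank F L = 2 → Even #{P ∈ K | P ≤ L} ∨ #{P ∈ K | P ≤ L} = 3

section Finite

variable [Finite V]

variable (F V) in
noncomputable def points : Finset (Submodule F V) :=
  {P | finrank F P = 1}

noncomputable def pointsOn (L : Submodule F V) : Finset (Submodule F V) :=
  {P | finrank F P = 1 ∧ P ≤ L}

noncomputable def linesThrough (Z : Submodule F V) : Finset (Submodule F V) :=
  {L | finrank F L = 2 ∧ Z ≤ L}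

theorem mem_points {P : Submodule F V} : P ∈ points F V ↔ finrank F P = 1 := by
  simp [points]

theorem mem_pointsOn {P L : Submodule F V} : P ∈ pointsOn L ↔ finrank F P = 1 ∧ P ≤ L := by
  simp [pointsOn]

theorem mem_linesThrough {Z L : Submodule F V} :
    L ∈ linesThrough Z ↔ finrank F L = 2 ∧ Z ≤ L := by
  simp [linesThrough]

theorem sum_linesThrough_card_filter_le {Z : Submodule F V} (hZ : finrank F Z = 1)
    {S : Finset (Submodule F V)} (hS : ∀ X ∈ S, finrank F X = 1 ∧ X ≠ Z) :
    ∑ L ∈ linesThrough Z, #{X ∈ S | X ≤ L} = #S := by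
  rw [card_eq_sum_card_fiberwise (t := linesThrough Z) (f := fun X => Z ⊔ X) fun X hX =>
    mem_linesThrough.2 ⟨finrank_sup_eq_two hZ (hS X hX).1 (hS X hX).2.symm, le_sup_left⟩]
  refine sum_congr rfl fun L hL => congrArg card (filter_congr fun X hX => ?_)
  obtain ⟨hL, hZL⟩ := mem_linesThrough.1 hL
  exact ⟨fun h => (eq_sup_of_le hZ (hS X hX).1 (hS X hX).2.symm hL hZL h).symm,
    fun h => h ▸ le_sup_right⟩

theorem card_pointsOn [Finite F] {L : Submodule F V} (hL : finrank F L = 2) :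
    #(pointsOn L) = Nat.card F + 1 := by
  have e : {P : Submodule F L // finrank F P = 1} ≃ pointsOn L :=
    (Submodule.MapSubtype.orderIso L).toEquiv.subtypeEquiv (q := fun Q => finrank F Q.1 = 1)
      (fun P => by rw [← Submodule.finrank_map_subtype_eq L P]; rfl) |>.trans
    { toFun := fun Q => ⟨Q.1.1, mem_pointsOn.2 ⟨Q.2, Q.1.2⟩⟩
      invFun := fun Q => ⟨⟨Q.1, (mem_pointsOn.1 Q.2).2⟩, (mem_pointsOn.1 Q.2).1⟩ }
  rw [← Projectivization.card_of_finrank_two F L hL, Nat.card_congr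
    ((Projectivization.equivSubmodule F L).trans e), Nat.card_eq_fintype_card, Fintype.card_coe]

theorem card_points [Finite F] (hV : finrank F V = 3) :
    #(points F V) = Nat.card F ^ 2 + Nat.card F + 1 := by
  rw [points, ← Fintype.card_subtype, ← Nat.card_eq_fintype_card,
    ← Nat.card_congr (Projectivization.equivSubmodule F V),
    Projectivization.card_of_finrank F V hV]
  simp [Finset.sum_range_succ]
  ring

theorem card_linesThrough [Finite F] (hV : finrank F V = 3) {Z : Submodule F V}
    (hZ : finrank F Z = 1) : #(linesThrough Z) = Nat.card F + 1 := by
  set S := (points F V).erase Z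
  have hS : ∀ X ∈ S, finrank F X = 1 ∧ X ≠ Z := fun X hX => by
    rw [mem_erase, mem_points] at hX
    exact ⟨hX.2, hX.1⟩
  have hfiber : ∀ L ∈ linesThrough Z, #{X ∈ S | X ≤ L} = Nat.card F := fun L hL => by
    obtain ⟨hL, hZL⟩ := mem_linesThrough.1 hL
    have : {X ∈ S | X ≤ L} = (pointsOn L).erase Z := by
      ext X; simp [S, mem_points, mem_pointsOn, and_assoc]
    rw [this, card_erase_of_mem (mem_pointsOn.2 ⟨hZ, hZL⟩), card_pointsOn hL, Nat.add_sub_cancel]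
  have hpencil := sum_linesThrough_card_filter_le hZ hS
  rw [sum_congr rfl hfiber, sum_const, smul_eq_mul, card_erase_of_mem (mem_points.2 hZ),
    card_points hV, Nat.add_sub_cancel, sq, ← Nat.mul_succ, mul_comm] at hpencil
  exact Nat.eq_of_mul_eq_mul_left Nat.card_pos hpencil

noncomputable def trisecants (K : Finset (Submodule F V)) : Finset (Submodule F V) :=
  {L | finrank F L = 2 ∧ #{P ∈ K | P ≤ L} = 3}

theorem mem_trisecants {K : Finset (Submodule F V)} {L : Submodule F V} :
    L ∈ trisecants K ↔ finrank F L = 2 ∧ #{P ∈ K | P ≤ L} = 3 := by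
  simp [trisecants]

section Trisecants

variable {K : Finset (Submodule F V)}

theorem odd_card_trisecants_iff (hsec : LinesMeetEvenlyOrInThree K) (Z : Submodule F V) :
    Odd #{L ∈ trisecants K | Z ≤ L} ↔ Odd (∑ L ∈ linesThrough Z, #{P ∈ K | P ≤ L}) := by
  rw [odd_sum_iff_odd_card_odd]
  congr! 2
  ext L
  simp only [mem_filter, mem_trisecants, mem_linesThrough]
  constructor
  · rintro ⟨⟨hL, h3⟩, hZL⟩
    exact ⟨⟨hL, hZL⟩, h3 ▸ odd_two_mul_add_one 1⟩
  · rintro ⟨⟨hL, hZL⟩, hodd⟩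
    exact ⟨⟨hL, (hsec L hL).resolve_left (Nat.not_even_iff_odd.2 hodd)⟩, hZL⟩

theorem sum_linesThrough_card_filter_le_of_notMem (hK : ∀ P ∈ K, finrank F P = 1)
    {Z : Submodule F V} (hZ : finrank F Z = 1) (hZK : Z ∉ K) :
    ∑ L ∈ linesThrough Z, #{P ∈ K | P ≤ L} = #K :=
  sum_linesThrough_card_filter_le hZ fun X hX => ⟨hK X hX, fun h => hZK (h ▸ hX)⟩

theorem sum_linesThrough_card_filter_le_of_mem (hK : ∀ P ∈ K, finrank F P = 1)
    {Z : Submodule F V} (hZK : Z ∈ K) :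
    ∑ L ∈ linesThrough Z, #{P ∈ K | P ≤ L} = #K - 1 + #(linesThrough Z) := by
  have hZ := hK Z hZK
  have hpencil := sum_linesThrough_card_filter_le (S := K.erase Z) hZ fun X hX =>
    ⟨hK X (mem_of_mem_erase hX), ne_of_mem_erase hX⟩
  rw [card_erase_of_mem hZK] at hpencil
  rw [← hpencil, card_eq_sum_ones (linesThrough Z), ← sum_add_distrib]
  refine sum_congr rfl fun L hL => ?_
  rw [filter_erase, card_erase_add_one (mem_filter.2 ⟨hZK, (mem_linesThrough.1 hL).2⟩)]

theorem odd_card_trisecants_of_mem [Finite F] (hV : finrank F V = 3) (hq : Odd (Nat.card F))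
    (hK : ∀ P ∈ K, finrank F P = 1) (hKeven : Even #K) (hsec : LinesMeetEvenlyOrInThree K)
    {Z : Submodule F V} (hZK : Z ∈ K) : Odd #{L ∈ trisecants K | Z ≤ L} := by
  rw [odd_card_trisecants_iff hsec, sum_linesThrough_card_filter_le_of_mem hK hZK,
    card_linesThrough hV (hK Z hZK), ← add_assoc, add_right_comm,
    Nat.sub_add_cancel (card_pos.2 ⟨Z, hZK⟩)]
  exact hKeven.add_odd hq

theorem even_card_trisecants_of_notMem (hK : ∀ P ∈ K, finrank F P = 1) (hKeven : Even #K)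
    (hsec : LinesMeetEvenlyOrInThree K) {Z : Submodule F V} (hZ : finrank F Z = 1) (hZK : Z ∉ K) :
    Even #{L ∈ trisecants K | Z ≤ L} := by
  rw [← Nat.not_odd_iff_even, odd_card_trisecants_iff hsec,
    sum_linesThrough_card_filter_le_of_notMem hK hZ hZK, Nat.not_odd_iff_even]
  exact hKeven

theorem card_pointsOn_sdiff_add_card_filter [Finite F] (hK : ∀ P ∈ K, finrank F P = 1)
    {L : Submodule F V} (hL : finrank F L = 2) :
    #(pointsOn L \ K) + #{P ∈ K | P ≤ L} = Nat.card F + 1 := by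
  rw [← card_pointsOn hL, ← card_sdiff_add_card_inter (pointsOn L) K]
  congr 2
  ext P
  simp only [mem_inter, mem_filter, mem_pointsOn]
  exact ⟨fun h => ⟨⟨hK P h.1, h.2⟩, h.1⟩, fun h => ⟨h.2, h.1.2⟩⟩

theorem card_pointsOn_sdiff_le [Finite F] (hK : ∀ P ∈ K, finrank F P = 1) (hKeven : Even #K)
    (hsec : LinesMeetEvenlyOrInThree K) {L : Submodule F V} (hL : L ∈ trisecants K) :
    #(pointsOn L \ K) ≤ #{L' ∈ trisecants K | L' ≠ L ∧ ∀ P ∈ K, P ≤ L → ¬P ≤ L'} := by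
  obtain ⟨hL2, -⟩ := mem_trisecants.1 hL
  refine card_le_card_of_forall_subsingleton (fun Z L' => Z ≤ L') (fun Z hZ => ?_) ?_
  · obtain ⟨hZ, hZK⟩ := mem_sdiff.1 hZ
    obtain ⟨hZ1, hZL⟩ := mem_pointsOn.1 hZ
    have hLZ : L ∈ {L ∈ trisecants K | Z ≤ L} := mem_filter.2 ⟨hL, hZL⟩
    have h2 : 1 < #{L ∈ trisecants K | Z ≤ L} := by
      obtain ⟨r, hr⟩ := even_card_trisecants_of_notMem hK hKeven hsec hZ1 hZK
      have := card_pos.2 ⟨L, hLZ⟩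
      omega
    obtain ⟨L', hL', hne⟩ := exists_mem_ne h2 L
    obtain ⟨hL'T, hZL'⟩ := mem_filter.1 hL'
    refine ⟨L', mem_filter.2 ⟨hL'T, hne, fun P hPK hPL hPL' => hne ?_⟩, hZL'⟩
    exact line_eq_of_le (hK P hPK) hZ1 (fun h => hZK (h ▸ hPK)) (mem_trisecants.1 hL'T).1 hL2
      hPL' hZL' hPL hZL
  · intro L' hL' Z₁ ⟨hZ₁, hZ₁L'⟩ Z₂ ⟨hZ₂, hZ₂L'⟩
    obtain ⟨hL'T, hne, -⟩ := mem_filter.1 hL'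
    obtain ⟨hZ₁1, hZ₁L⟩ := mem_pointsOn.1 (mem_sdiff.1 hZ₁).1
    obtain ⟨hZ₂1, hZ₂L⟩ := mem_pointsOn.1 (mem_sdiff.1 hZ₂).1
    by_contra hZ
    exact hne (line_eq_of_le hZ₁1 hZ₂1 hZ (mem_trisecants.1 hL'T).1 hL2 hZ₁L' hZ₂L' hZ₁L hZ₂L)

theorem sum_card_trisecants_filter (K : Finset (Submodule F V)) :
    ∑ P ∈ K, #{L ∈ trisecants K | P ≤ L} = 3 * #(trisecants K) := by
  rw [mul_comm, ← smul_eq_mul, ← sum_const]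
  exact (sum_card_bipartiteAbove_eq_sum_card_bipartiteBelow (r := (· ≤ ·))).trans
    (sum_congr rfl fun L hL => (mem_trisecants.1 hL).2)

theorem sum_card_offDiag_add_le [Finite F] (hK : ∀ P ∈ K, finrank F P = 1) (hKeven : Even #K)
    (hsec : LinesMeetEvenlyOrInThree K) :
    ∑ P ∈ K, #{L ∈ trisecants K | P ≤ L}.offDiag + #(trisecants K) * (Nat.card F - 2)
      ≤ #(trisecants K).offDiag := by
  set T := trisecants K
  have hT : ∀ L ∈ T, finrank F L = 2 := fun L hL => (mem_trisecants.1 hL).1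
  set U := K.biUnion fun P => {L ∈ T | P ≤ L}.offDiag
  set D := {p ∈ T.offDiag | ∀ P ∈ K, P ≤ p.1 → ¬P ≤ p.2}
  have hD : #T * (Nat.card F - 2) ≤ #D := by
    rw [card_eq_sum_card_fiberwise (f := Prod.fst) (t := T)
      fun p hp => (mem_offDiag.1 (mem_filter.1 hp).1).1, ← smul_eq_mul, ← sum_const]
    refine sum_le_sum fun L hL => ?_
    calc Nat.card F - 2 = #(pointsOn L \ K) := by
          have := card_pointsOn_sdiff_add_card_filter hK (hT L hL)
          rw [(mem_trisecants.1 hL).2] at this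
          omega
      _ ≤ #{L' ∈ T | L' ≠ L ∧ ∀ P ∈ K, P ≤ L → ¬P ≤ L'} :=
          card_pointsOn_sdiff_le hK hKeven hsec hL
      _ ≤ #{p ∈ D | p.1 = L} := by
          refine card_le_card_of_injOn (fun L' => (L, L')) (fun L' hL' => ?_)
            fun _ _ _ _ h => (Prod.ext_iff.1 h).2
          obtain ⟨hL'T, hne, hdisj⟩ := mem_filter.1 hL'
          rw [mem_coe, mem_filter, mem_filter, mem_offDiag]
          exact ⟨⟨⟨hL, hL'T, Ne.symm hne⟩, hdisj⟩, rfl⟩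
  have hUD : Disjoint U D := by
    refine disjoint_left.2 fun p hpU hpD => ?_
    obtain ⟨P, hPK, hp⟩ := mem_biUnion.1 hpU
    simp only [mem_offDiag, mem_filter] at hp
    exact (mem_filter.1 hpD).2 P hPK hp.1.2 hp.2.1.2
  have hsub : U ∪ D ⊆ T.offDiag := by
    refine union_subset (fun p hp => ?_) (filter_subset _ _)
    obtain ⟨P, -, hp⟩ := mem_biUnion.1 hp
    simp only [mem_offDiag, mem_filter] at hp ⊢
    exact ⟨hp.1.1, hp.2.1.1, hp.2.2⟩
  calc _ ≤ #U + #D := by rw [card_biUnion_offDiag hT hK]; exact Nat.add_le_add_left hD _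
    _ = #(U ∪ D) := (card_union_of_disjoint hUD).symm
    _ ≤ _ := card_le_card hsub

theorem card_trisecants_mul_le [Finite F] (hV : finrank F V = 3) (hq : Odd (Nat.card F))
    (hK : ∀ P ∈ K, finrank F P = 1) (hKeven : Even #K) (hsec : LinesMeetEvenlyOrInThree K) :
    #(trisecants K) * (Nat.card F + 8) ≤ #(trisecants K) * #(trisecants K) + 3 * #K := by
  have hpoint : ∀ P ∈ K,
      3 * #{L ∈ trisecants K | P ≤ L} ≤ #{L ∈ trisecants K | P ≤ L}.offDiag + 3 := fun P hP => by
    obtain ⟨k, hk⟩ := odd_card_trisecants_of_mem hV hq hK hKeven hsec hP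
    rw [offDiag_card, hk, ← Nat.mul_sub_one, Nat.add_sub_cancel]
    nlinarith [Nat.le_mul_self k]
  have hsum := sum_le_sum hpoint
  rw [← mul_sum, sum_card_trisecants_filter, sum_add_distrib, sum_const, smul_eq_mul] at hsum
  have hpairs := sum_card_offDiag_add_le hK hKeven hsec
  rw [offDiag_card] at hpairs
  set t := #(trisecants K)
  have hq2 : t * (Nat.card F - 2) + t * 2 = t * Nat.card F := by
    rw [← mul_add, Nat.sub_add_cancel Finite.one_lt_card]
  have : t ≤ t * t := Nat.le_mul_self t
  rw [mul_add]
  omega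

end Trisecants

end Finite

end ProjectiveSpace

theorem stmt17_general (K : Finset (Submodule (ZMod 7) (Fin 3 → ZMod 7)))
    (hpts : ∀ P ∈ K, finrank (ZMod 7) P = 1)
    (hcard : K.card = 14)
    (a : ℕ → ℕ)
    (ha : ∀ i, a i = Nat.card {L : Submodule (ZMod 7) (Fin 3 → ZMod 7) //
        finrank (ZMod 7) L = 2 ∧ (K.filter fun P => P ≤ L).card = i})
    (h3 : a 3 = 10)
    (hother : ∀ i, i ≠ 0 → i ≠ 2 → i ≠ 3 → i ≠ 4 → a i = 0) :
    False := by
  have hT : #(ProjectiveSpace.trisecants K) = 10 := by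
    rw [← h3, ha, Nat.card_eq_fintype_card, Fintype.card_subtype]
    rfl
  have hsec : ProjectiveSpace.LinesMeetEvenlyOrInThree K := by
    intro L hL
    have hpos : a #{P ∈ K | P ≤ L} ≠ 0 := by
      rw [ha]
      exact Nat.card_ne_zero.2 ⟨⟨⟨L, hL, rfl⟩⟩, inferInstance⟩
    by_contra h
    rw [not_or, Nat.not_even_iff_odd, Nat.odd_iff] at h
    exact hpos (hother _ (by omega) (by omega) h.2 (by omega))
  have hbound := ProjectiveSpace.card_trisecants_mul_le (by simp) (by rw [Nat.card_zmod]; decide)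
    hpts (by rw [hcard]; decide) hsec
  rw [hT, hcard, Nat.card_zmod] at hbound
  norm_num at hbound

/-- no set `K` of `14` points in `PG(2,7)` has line spectrum
`(a 0, a 2, a 3, a 4) = (11, 31, 10, 5)` with all other `a i = 0`, where `a i`
counts the lines meeting `K` in exactly `i` points. -/
theorem stmt17 (K : Finset (Submodule (ZMod 7) (Fin 3 → ZMod 7)))
    (hpts : ∀ P ∈ K, finrank (ZMod 7) P = 1)
    (hcard : K.card = 14)
    (a : ℕ → ℕ)
    (ha : ∀ i, a i = Nat.card {L : Submodule (ZMod 7) (Fin 3 → ZMod 7) //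
        finrank (ZMod 7) L = 2 ∧ (K.filter fun P => P ≤ L).card = i})
    (h0 : a 0 = 11) (h2 : a 2 = 31) (h3 : a 3 = 10) (h4 : a 4 = 5)
    (hother : ∀ i, i ≠ 0 → i ≠ 2 → i ≠ 3 → i ≠ 4 → a i = 0) :
    False :=
  stmt17_general K hpts hcard a ha h3 hother
end

section
/- Let q ≥ 4. There do not exist nonnegative integers a_0, a_{q−2}, a_{q−1} satisfying a_0 + a_{q−2} + a_{q−1} = q^2 + q + 1, (q−2)a_{q−2} + (q−1)a_{q−1} = q(q−2)(q+1), and C(q−2,2)a_{q−2} + C(q−1,2)a_{q−1} = C(q(q−2), 2). -/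
set_option maxHeartbeats 800000

lemma two_mul_choose_two (n : ℕ) : 2 * Nat.choose n 2 = n * (n - 1) := by
  cases n with
  | zero => simp
  | succ m =>
    rw [Nat.choose_two_right, Nat.succ_sub_one, Nat.mul_div_cancel']
    rw [mul_comm]
    exact (Nat.even_mul_succ_self m).two_dvd

/-- for `q ≥ 4` there are no nonnegative integers
`a0, a_{q-2}, a_{q-1}` satisfying the three standard equations for a
hypothetical set of `q(q-2)` points in `PG(2,q)` whose line multiplicities are
all in `{0, q-2, q-1}`. -/
theorem stmt18 (q : ℕ) (hq : 4 ≤ q) :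
    ¬ ∃ a0 aq2 aq1 : ℕ,
      a0 + aq2 + aq1 = q ^ 2 + q + 1 ∧
      (q - 2) * aq2 + (q - 1) * aq1 = q * (q - 2) * (q + 1) ∧
      Nat.choose (q - 2) 2 * aq2 + Nat.choose (q - 1) 2 * aq1
        = Nat.choose (q * (q - 2)) 2 := by
  rintro ⟨a0, a2, a1, h1, h2, h3⟩
  -- multiply h3 by 2 and rewrite the binomials
  have h3' : (q - 2) * (q - 2 - 1) * a2 + (q - 1) * (q - 1 - 1) * a1
      = q * (q - 2) * (q * (q - 2) - 1) := by
    have e := congrArg (HMul.hMul 2) h3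
    rw [Nat.mul_add, ← mul_assoc, ← mul_assoc, two_mul_choose_two,
      two_mul_choose_two, two_mul_choose_two] at e
    exact e
  -- cast to ℤ
  have hQ : (4 : ℤ) ≤ (q : ℤ) := by exact_mod_cast hq
  have c2 : ((q - 2 : ℕ) : ℤ) = (q : ℤ) - 2 := by
    rw [Nat.cast_sub (by omega : 2 ≤ q)]; norm_num
  have c1 : ((q - 1 : ℕ) : ℤ) = (q : ℤ) - 1 := by
    rw [Nat.cast_sub (by omega : 1 ≤ q)]; norm_num
  have c3 : ((q - 2 - 1 : ℕ) : ℤ) = (q : ℤ) - 3 := by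
    rw [Nat.sub_sub, Nat.cast_sub (by omega : 3 ≤ q)]; norm_num
  have c11 : ((q - 1 - 1 : ℕ) : ℤ) = (q : ℤ) - 2 := by
    rw [Nat.sub_sub, Nat.cast_sub (by omega : 2 ≤ q)]; norm_num
  have cQ : ((q * (q - 2) - 1 : ℕ) : ℤ) = (q : ℤ) * ((q : ℤ) - 2) - 1 := by
    have h1q : 1 ≤ q * (q - 2) := Nat.one_le_iff_ne_zero.mpr (Nat.mul_ne_zero (by omega) (by omega))
    rw [Nat.cast_sub h1q, Nat.cast_mul, c2]; norm_num
  have e1 : (a0 : ℤ) + a2 + a1 = (q : ℤ) ^ 2 + q + 1 := by exact_mod_cast h1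
  have e2 : ((q : ℤ) - 2) * a2 + ((q : ℤ) - 1) * a1 = (q : ℤ) * ((q : ℤ) - 2) * ((q : ℤ) + 1) := by
    have := congrArg (Nat.cast : ℕ → ℤ) h2
    push_cast [c1, c2] at this
    linarith [this]
  have e3 : ((q : ℤ) - 2) * ((q : ℤ) - 3) * a2 + ((q : ℤ) - 1) * ((q : ℤ) - 2) * a1
      = (q : ℤ) * ((q : ℤ) - 2) * ((q : ℤ) * ((q : ℤ) - 2) - 1) := by
    have := congrArg (Nat.cast : ℕ → ℤ) h3'
    push_cast [c1, c2, c3, c11, cQ] at this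
    linarith [this]
  -- linear algebra
  have h4 : ((q : ℤ) - 1) * a1 = 2 * q * ((q : ℤ) - 2) := by
    linear_combination e3 - ((q : ℤ) - 3) * e2
  have h5 : ((q : ℤ) - 2) * a0 - a1 = (q : ℤ) - 2 := by
    linear_combination ((q : ℤ) - 2) * e1 - e2
  have h6 : ((q : ℤ) - 2) * (((q : ℤ) - 1) * a0 - (3 * q - 1)) = 0 := by
    linear_combination ((q : ℤ) - 1) * h5 + h4
  have h7 : ((q : ℤ) - 1) * ((a0 : ℤ) - 3) = 2 := by
    rcases mul_eq_zero.mp h6 with h | h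
    · linarith
    · linear_combination h
  rcases le_or_gt ((a0 : ℤ)) 3 with h | h
  · have := mul_nonpos_of_nonneg_of_nonpos
      (by linarith : (0 : ℤ) ≤ (q : ℤ) - 1) (by linarith : (a0 : ℤ) - 3 ≤ 0)
    linarith
  · have : (3 : ℤ) * 1 ≤ ((q : ℤ) - 1) * ((a0 : ℤ) - 3) :=
      mul_le_mul (by linarith) (by linarith) (by norm_num) (by linarith)
    linarith
end
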